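/- arXiv:1910.12567 — 10 statements merged into one kernel-verified Lean document; each statement's English description precedes it below -/
import Mathlib

section
/- Let R ≅ R₁ × ⋯ × R_r be a finite commutative ring with each R_i a finite local ring. Define the equivalence on R by r ~ s iff ann_R(r) = ann_R(s), and let R_E denote the set of equivalence classes. Then #R_E = ∏ #(R_i)_E, where (R_i)_E is defined analogously for R_i. -/
/-- Two ring elements are equivalent iff they have the same annihilator. -/
def annSetoid (R : Type*) [CommRing R] : Setoid R :=
  ⟨fun r s => ∀ x, x * r = 0 ↔ x * s = 0,
   fun _ _ => Iff.rfl, fun h x => (h x).symm, fun h1 h2 x => (h1 x).trans (h2 x)⟩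

/-- A ring isomorphism induces an equivalence of annihilator quotients. -/
def annQuotCongr {R S : Type*} [CommRing R] [CommRing S] (e : R ≃+* S) :
    Quotient (annSetoid R) ≃ Quotient (annSetoid S) :=
  Quotient.congr e.toEquiv (by
    intro a b
    constructor
    · intro h x
      show x * e a = 0 ↔ x * e b = 0
      have key : ∀ c : R, x * e c = e (e.symm x * c) := fun c => by
        rw [map_mul, e.apply_symm_apply]
      rw [key a, key b, map_eq_zero_iff e e.injective, map_eq_zero_iff e e.injective]
      exact h _
    · intro h x
      have h2 : e x * e a = 0 ↔ e x * e b = 0 := h (e x)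
      rw [← map_mul, ← map_mul, map_eq_zero_iff e e.injective,
        map_eq_zero_iff e e.injective] at h2
      exact h2)

/-- The annihilator quotient of a finite product is the product of quotients. -/
noncomputable def annQuotPi (r : ℕ) (Ri : Fin r → Type) [∀ i, CommRing (Ri i)] :
    Quotient (annSetoid (∀ i, Ri i)) ≃ ∀ i, Quotient (annSetoid (Ri i)) := by
  apply Equiv.ofBijective
    (Quotient.lift (fun a i => (⟦a i⟧ : Quotient (annSetoid (Ri i))))
      (by
        intro a b hab
        funext i
        apply Quotient.sound
        intro y
        have h1 := hab (Pi.single i y)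
        constructor
        · intro hy
          have : ∀ j, Pi.single i y j * a j = 0 := by
            intro j
            by_cases hji : j = i
            · subst hji; simpa using hy
            · simp [Pi.single_eq_of_ne hji]
          have := congrFun (h1.mp (funext this)) i
          simpa using this
        · intro hy
          have : ∀ j, Pi.single i y j * b j = 0 := by
            intro j
            by_cases hji : j = i
            · subst hji; simpa using hy
            · simp [Pi.single_eq_of_ne hji]
          have := congrFun (h1.mpr (funext this)) i
          simpa using this))
  constructor
  · intro a b hab
    induction a using Quotient.inductionOn with | h a =>
    induction b using Quotient.inductionOn with | h b =>
    apply Quotient.sound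
    intro x
    have : ∀ i, ∀ y : Ri i, y * a i = 0 ↔ y * b i = 0 := by
      intro i
      exact Quotient.exact (congrFun hab i)
    constructor
    · intro hx; funext i; exact (this i (x i)).mp (congrFun hx i)
    · intro hx; funext i; exact (this i (x i)).mpr (congrFun hx i)
  · intro f
    refine ⟨⟦fun i => (f i).out⟧, ?_⟩
    funext i
    simp [Quotient.out_eq]

/-- The number of annihilator-equivalence classes is multiplicative:
if `R ≅ R₁ × ⋯ × R_r` with finite local rings `R_i`, then `#R_E = ∏ #(R_i)_E`. -/
theorem stmt3 (r : ℕ) (R : Type) [CommRing R] [Finite R]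
    (Ri : Fin r → Type) [∀ i, CommRing (Ri i)] [∀ i, Finite (Ri i)] [∀ i, IsLocalRing (Ri i)]
    (e : R ≃+* ∀ i, Ri i) :
    Nat.card (Quotient (annSetoid R)) = ∏ i, Nat.card (Quotient (annSetoid (Ri i))) := by
  rw [Nat.card_congr ((annQuotCongr e).trans (annQuotPi r Ri)), Nat.card_pi]
end

section
/- Let R be a finite commutative ring. If the number of annihilator-equivalence classes #R_E is a prime number, then R is a local ring. -/
lemma ann_rel_map {R S : Type*} [CommRing R] [CommRing S] (f : R ≃+* S) {a b : R}
    (h : (annSetoid R).r a b) : (annSetoid S).r (f a) (f b) := by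
  intro y
  have key : ∀ c : R, y * f c = 0 ↔ f.symm y * c = 0 := by
    intro c
    have : y * f c = f (f.symm y * c) := by rw [map_mul, f.apply_symm_apply]
    rw [this, map_eq_zero_iff f f.injective]
  rw [key a, key b]
  exact h (f.symm y)

noncomputable def annQuotEquiv {R S : Type*} [CommRing R] [CommRing S] (f : R ≃+* S) :
    Quotient (annSetoid R) ≃ Quotient (annSetoid S) :=
  Quotient.congr f.toEquiv (fun a b =>
    ⟨fun h => ann_rel_map f h, fun h => by
      have := ann_rel_map f.symm h
      simpa using this⟩)

lemma annSetoid_prod (A B : Type*) [CommRing A] [CommRing B] :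
    annSetoid (A × B) = (annSetoid A).prod (annSetoid B) := by
  apply Setoid.ext
  intro p q
  constructor
  · intro h
    constructor
    · intro x
      have := h (x, 0)
      simpa [Prod.ext_iff] using this
    · intro x
      have := h (0, x)
      simpa [Prod.ext_iff] using this
  · rintro ⟨h1, h2⟩ x
    simp [Prod.ext_iff, h1 x.1, h2 x.2]

lemma two_le_annCard (A : Type*) [CommRing A] [Finite A] [Nontrivial A] :
    2 ≤ Nat.card (Quotient (annSetoid A)) := by
  have hne : (⟦0⟧ : Quotient (annSetoid A)) ≠ ⟦1⟧ := by
    intro hq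
    have := Quotient.exact hq 1
    simp at this
  have : Nontrivial (Quotient (annSetoid A)) := ⟨_, _, hne⟩
  have : Finite (Quotient (annSetoid A)) := Quotient.finite _
  exact Finite.one_lt_card

lemma exists_pow_idem {R : Type*} [CommRing R] [Finite R] (a : R) :
    ∃ n, 1 ≤ n ∧ a ^ n * a ^ n = a ^ n := by
  obtain ⟨i, j, hij, he⟩ := Finite.exists_ne_map_eq_of_infinite (fun n : ℕ => a ^ n)
  wlog hlt : i < j generalizing i j
  · exact this j i hij.symm he.symm ((hij.lt_or_gt).resolve_left hlt)
  set d := j - i with hd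
  have hd1 : 1 ≤ d := by omega
  have step : ∀ m, i ≤ m → a ^ (m + d) = a ^ m := by
    intro m hm
    have h1 : a ^ (m + d) = a ^ (m - i) * a ^ j := by
      rw [← pow_add]; congr 1; omega
    rw [h1, ← he, ← pow_add]
    congr 1; omega
  have key : ∀ k m, i ≤ m → a ^ (m + k * d) = a ^ m := by
    intro k
    induction k with
    | zero => simp
    | succ k ih =>
      intro m hm
      have h2 : m + (k + 1) * d = (m + d) + k * d := by ring
      rw [h2, ih (m + d) (by omega), step m hm]
  refine ⟨(i + 1) * d, by nlinarith, ?_⟩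
  have hni : i ≤ (i + 1) * d := by nlinarith
  rw [← pow_add]
  exact key (i + 1) ((i + 1) * d) hni

/-- If the number of annihilator-equivalence classes of a finite commutative
ring is prime, then the ring is local. -/
theorem stmt4 (R : Type) [CommRing R] [Finite R] [Nontrivial R]
    (h : (Nat.card (Quotient (annSetoid R))).Prime) : IsLocalRing R := by
  by_contra hL
  have hex : ∃ a : R, ¬IsUnit a ∧ ¬IsUnit (1 - a) := by
    by_contra hc
    push_neg at hc
    exact hL (IsLocalRing.of_isUnit_or_isUnit_one_sub_self fun a =>
      or_iff_not_imp_left.mpr (hc a))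
  obtain ⟨a, ha, ha'⟩ := hex
  obtain ⟨n, hn1, hidem⟩ := exists_pow_idem a
  set e := a ^ n with hedef
  have he0 : e ≠ 0 := by
    intro h0
    exact ha' (IsNilpotent.isUnit_one_sub ⟨n, h0⟩)
  have he1 : e ≠ 1 := by
    intro h1
    have : a * a ^ (n - 1) = 1 := by
      rw [← pow_succ']
      rw [show n - 1 + 1 = n from by omega]
      exact h1.symm ▸ rfl
    exact ha (IsUnit.of_mul_eq_one _ this)
  -- ideals
  set I := Ideal.span ({e} : Set R) with hI
  set J := Ideal.span ({1 - e} : Set R) with hJ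
  have hItop : I ≠ ⊤ := by
    rw [hI, Ne, Ideal.span_singleton_eq_top]
    intro hu
    exact he1 (hu.mul_left_cancel (by rw [mul_one]; exact hidem))
  have hJtop : J ≠ ⊤ := by
    rw [hJ, Ne, Ideal.span_singleton_eq_top]
    intro hu
    have : (1 - e) * (1 - e) = (1 - e) * 1 := by
      rw [mul_one]; linear_combination hidem
    have h1e : (1 - e : R) = 1 := hu.mul_left_cancel this
    apply he0
    linear_combination -h1e
  have hsup : I ⊔ J = ⊤ := by
    rw [Ideal.eq_top_iff_one]
    have h1 : (1 : R) = e + (1 - e) := by ring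
    rw [h1]
    exact Submodule.add_mem _ (Ideal.mem_sup_left (Ideal.mem_span_singleton_self e))
      (Ideal.mem_sup_right (Ideal.mem_span_singleton_self (1 - e)))
  have hcop : IsCoprime I J := Ideal.isCoprime_iff_sup_eq.mpr hsup
  have hinf : I ⊓ J = ⊥ := by
    apply le_antisymm _ bot_le
    intro x hx
    have hx' : x ∈ I ∧ x ∈ J := Submodule.mem_inf.mp hx
    obtain ⟨u, hu⟩ := Ideal.mem_span_singleton.mp (hI ▸ hx'.1)
    obtain ⟨v, hv⟩ := Ideal.mem_span_singleton.mp (hJ ▸ hx'.2)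
    have h1 : x * e = 0 := by rw [hv]; linear_combination -v * hidem
    have h2 : x * (1 - e) = 0 := by rw [hu]; linear_combination -u * hidem
    rw [Submodule.mem_bot]
    linear_combination h1 + h2
  have hntI : Nontrivial (R ⧸ I) := Ideal.Quotient.nontrivial_iff.mpr hItop
  have hntJ : Nontrivial (R ⧸ J) := Ideal.Quotient.nontrivial_iff.mpr hJtop
  have hfI : Finite (R ⧸ I) := Quotient.finite _
  have hfJ : Finite (R ⧸ J) := Quotient.finite _
  have f : R ≃+* (R ⧸ I) × (R ⧸ J) :=
    ((RingEquiv.quotientBot R).symm.trans (Ideal.quotEquivOfEq hinf.symm)).trans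
      (Ideal.quotientInfEquivQuotientProd I J hcop)
  have hcard : Nat.card (Quotient (annSetoid R)) =
      Nat.card (Quotient (annSetoid (R ⧸ I))) * Nat.card (Quotient (annSetoid (R ⧸ J))) := by
    rw [Nat.card_congr (annQuotEquiv f), annSetoid_prod,
      ← Nat.card_congr (Setoid.prodQuotientEquiv (annSetoid (R ⧸ I)) (annSetoid (R ⧸ J))),
      Nat.card_prod]
  have h2I := two_le_annCard (R ⧸ I)
  have h2J := two_le_annCard (R ⧸ J)
  rw [hcard] at h
  exact Nat.not_prime_mul (by omega) (by omega) h
end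

section
/- Let Γ(R) be the zero-divisor graph of a finite commutative ring R (vertices the nonzero zero-divisors, edges xy whenever xy = 0, loops allowed). Then the rank of the adjacency matrix of Γ(R) is at most #V(Γ_E(R)), the number of vertices of the compressed zero-divisor graph; consequently the nullity of Γ(R) satisfies η(Γ(R)) ≥ #V(Γ(R)) − #V(Γ_E(R)). -/
/-- The rank of the adjacency matrix (with loops) of the zero-divisor graph
is at most the number of vertices of the compressed zero-divisor graph; hence the nullity
is at least `#V(Γ(R)) − #V(Γ_E(R))`. -/
theorem stmt6 (R : Type) [CommRing R] [Fintype R] [DecidableEq R] [Nontrivial R] :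
    let V := {x : R // x ≠ 0 ∧ ∃ y, y ≠ 0 ∧ x * y = 0}
    let A : Matrix V V ℝ := fun x y => if x.1 * y.1 = 0 then 1 else 0
    let NE := Nat.card (Quotient ((annSetoid R).comap (Subtype.val : V → R)))
    A.rank ≤ NE ∧
      Fintype.card V - NE ≤ Module.finrank ℝ (LinearMap.ker A.mulVecLin) := by
  intro V A NE
  haveI : DecidableEq (Quotient ((annSetoid R).comap (Subtype.val : V → R))) := by
    intro a b
    refine Quotient.recOnSubsingleton₂ a b (fun x y => ?_)
    exact decidable_of_iff (∀ z : R, z * x.1 = 0 ↔ z * y.1 = 0)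
      ⟨fun h => Quot.sound h, fun h => Quotient.exact h⟩
  haveI : Fintype (Quotient ((annSetoid R).comap (Subtype.val : V → R))) :=
    @Quotient.fintype V _ _
      (fun x y => inferInstanceAs (Decidable (∀ z : R, z * x.1 = 0 ↔ z * y.1 = 0)))
  -- the map sending a class to the corresponding column of A
  set g : Quotient ((annSetoid R).comap (Subtype.val : V → R)) → (V → ℝ) :=
    Quotient.lift (fun y : V => fun x : V => if x.1 * y.1 = 0 then (1:ℝ) else 0)
      (by
        intro y y' h
        funext x
        rw [if_congr (h x.1) rfl rfl]) with hg
  have hrank : A.rank ≤ NE := by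
    rw [Matrix.rank_eq_finrank_span_cols]
    have hsub : Set.range A.transpose ⊆ Set.range g := by
      rintro _ ⟨y, rfl⟩
      exact ⟨Quotient.mk _ y, rfl⟩
    calc Module.finrank ℝ (Submodule.span ℝ (Set.range A.transpose))
        ≤ Module.finrank ℝ (Submodule.span ℝ (Set.range g)) :=
          Submodule.finrank_mono (Submodule.span_mono hsub)
      _ ≤ (Set.range g).toFinset.card := finrank_span_le_card _
      _ = Fintype.card (Set.range g) := Set.toFinset_card _
      _ ≤ Fintype.card (Quotient ((annSetoid R).comap (Subtype.val : V → R))) :=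
          Fintype.card_range_le g
      _ = NE := (Nat.card_eq_fintype_card).symm
  refine ⟨hrank, ?_⟩
  have hrn := LinearMap.finrank_range_add_finrank_ker A.mulVecLin
  have hfr : Module.finrank ℝ (V → ℝ) = Fintype.card V := Module.finrank_fintype_fun_eq_card ℝ
  have hA : A.rank = Module.finrank ℝ (LinearMap.range A.mulVecLin) := rfl
  omega
end

section
/- Let R ≅ R₁ × ⋯ × R_r with finite local rings R_i. Then the nullity of Γ(R) is at least ∏ #R_i − ∏ #U(R_i) − ∏ #(R_i)_E + 1. -/
open Finset


/-- pi units equiv -/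
def piUnitsEquiv {ι : Type*} (M : ι → Type*) [∀ i, Monoid (M i)] :
    (∀ i, M i)ˣ ≃ ∀ i, (M i)ˣ where
  toFun u i := ⟨u.val i, u.inv i, congrFun u.val_inv i, congrFun u.inv_val i⟩
  invFun f := ⟨fun i => (f i).val, fun i => (f i).inv,
    funext fun i => (f i).val_inv, funext fun i => (f i).inv_val⟩
  left_inv u := Units.ext rfl
  right_inv f := funext fun i => Units.ext rfl

noncomputable def unitsEquivSubtype (M : Type*) [Monoid M] : Mˣ ≃ {x : M // IsUnit x} where
  toFun u := ⟨u, u.isUnit⟩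
  invFun x := x.2.unit
  left_inv u := Units.ext (IsUnit.unit_spec _)
  right_inv x := Subtype.ext x.2.unit_spec

lemma exists_ne_zero_mul_eq_zero {R : Type*} [CommRing R] [Finite R] {x : R}
    (h : ¬IsUnit x) : ∃ y, y ≠ 0 ∧ x * y = 0 := by
  by_contra hc
  push_neg at hc
  have hinj : Function.Injective (fun y : R => x * y) := by
    intro a b hab
    have : x * (a - b) = 0 := by simp only at hab; rw [mul_sub, hab, sub_self]
    by_contra hne
    exact hc (a - b) (sub_ne_zero.mpr (fun h' => hne (by rw [h']))) this
  obtain ⟨b, hb⟩ := (Finite.injective_iff_surjective.mp hinj) 1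
  exact h (IsUnit.of_mul_eq_one (a := x) b hb)

lemma card_partition (R : Type*) [CommRing R] [Fintype R] [DecidableEq R] [Nontrivial R] :
    Fintype.card R
      = Fintype.card {x : R // x ≠ 0 ∧ ∃ y, y ≠ 0 ∧ x * y = 0} + Fintype.card Rˣ + 1 := by
  classical
  have h1 : (univ.filter (fun x : R => IsUnit x)).card
      + (univ.filter (fun x : R => ¬ IsUnit x)).card = Fintype.card R := by
    rw [Finset.card_filter_add_card_filter_not, Finset.card_univ]
  have hsplit : univ.filter (fun x : R => ¬ IsUnit x)
      = univ.filter (fun x : R => x ≠ 0 ∧ ∃ y, y ≠ 0 ∧ x * y = 0) ∪ {0} := by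
    ext x
    simp only [mem_filter, mem_union, mem_singleton, mem_univ, true_and]
    constructor
    · intro hx
      by_cases h0 : x = 0
      · exact Or.inr h0
      · exact Or.inl ⟨h0, exists_ne_zero_mul_eq_zero hx⟩
    · rintro (⟨h0, y, hy, hxy⟩ | rfl)
      · intro hu
        obtain ⟨u, rfl⟩ := hu
        exact hy (by
          calc y = ↑u⁻¹ * (↑u * y) := by rw [← mul_assoc, u.inv_mul, one_mul]
          _ = 0 := by rw [hxy, mul_zero])
      · simp [isUnit_zero_iff]
  have hdisj : Disjoint (univ.filter (fun x : R => x ≠ 0 ∧ ∃ y, y ≠ 0 ∧ x * y = 0))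
      ({0} : Finset R) := by
    simp only [Finset.disjoint_singleton_right, mem_filter]
    rintro ⟨-, h0, -⟩
    exact h0 rfl
  have h2 : (univ.filter (fun x : R => ¬ IsUnit x)).card
      = (univ.filter (fun x : R => x ≠ 0 ∧ ∃ y, y ≠ 0 ∧ x * y = 0)).card + 1 := by
    rw [hsplit, Finset.card_union_of_disjoint hdisj, Finset.card_singleton]
  have h3 : (univ.filter (fun x : R => IsUnit x)).card = Fintype.card Rˣ := by
    rw [← Fintype.card_subtype, Fintype.card_congr (unitsEquivSubtype R)]
  have h4 : Fintype.card {x : R // x ≠ 0 ∧ ∃ y, y ≠ 0 ∧ x * y = 0}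
      = (univ.filter (fun x : R => x ≠ 0 ∧ ∃ y, y ≠ 0 ∧ x * y = 0)).card :=
    Fintype.card_subtype _
  omega

lemma key (R : Type*) [CommRing R] [Fintype R] [DecidableEq R] [Nontrivial R] :
    (Nat.card R : ℤ) - Nat.card Rˣ - Nat.card (Quotient (annSetoid R)) + 1
      ≤ (Module.finrank ℝ (LinearMap.ker
          (Matrix.mulVecLin (fun x y : {x : R // x ≠ 0 ∧ ∃ y, y ≠ 0 ∧ x * y = 0} =>
            if x.1 * y.1 = 0 then (1:ℝ) else 0))) : ℤ) := by
  classical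
  set V := {x : R // x ≠ 0 ∧ ∃ y, y ≠ 0 ∧ x * y = 0} with hV
  set A : Matrix V V ℝ := fun x y => if x.1 * y.1 = 0 then (1:ℝ) else 0 with hA
  letI : Fintype (Quotient (annSetoid R)) := Fintype.ofFinite _
  -- rank-nullity
  have hrn : Module.finrank ℝ (LinearMap.range A.mulVecLin)
      + Module.finrank ℝ (LinearMap.ker A.mulVecLin) = Fintype.card V := by
    rw [LinearMap.finrank_range_add_finrank_ker, Module.finrank_fintype_fun_eq_card]
  -- the lifted column function
  have hwd : ∀ s t : R, (annSetoid R).r s t →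
      (fun x : V => if x.1 * s = 0 then (1:ℝ) else 0)
        = (fun x : V => if x.1 * t = 0 then (1:ℝ) else 0) := by
    intro s t hst
    funext x
    exact if_congr (hst x.1) rfl rfl
  set cbar : Quotient (annSetoid R) → (V → ℝ) :=
    Quotient.lift (fun s : R => fun x : V => if x.1 * s = 0 then (1:ℝ) else 0) hwd with hcbar
  set T : Set (Quotient (annSetoid R)) :=
    {q | q ≠ Quotient.mk _ (0:R) ∧ q ≠ Quotient.mk _ (1:R)} with hT
  have hmemT : ∀ y : V, (Quotient.mk (annSetoid R) y.1) ∈ T := by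
    intro y
    constructor
    · intro h
      have h2 := Quotient.exact h 1
      simp only [mul_zero, one_mul, iff_true] at h2
      exact y.2.1 h2
    · intro h
      obtain ⟨z, hz, hzy⟩ := y.2.2
      have h2 := Quotient.exact h z
      rw [mul_comm] at h2
      rw [mul_one] at h2
      exact hz (h2.mp hzy)
  have hrange : LinearMap.range A.mulVecLin ≤ Submodule.span ℝ (cbar '' T) := by
    rintro w ⟨v, rfl⟩
    have hsum : A.mulVecLin v = ∑ y : V, v y • cbar (Quotient.mk _ y.1) := by
      funext x
      rw [Matrix.mulVecLin_apply]
      simp only [Matrix.mulVecLin_apply, Matrix.mulVec, dotProduct, Finset.sum_apply,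
        Pi.smul_apply, smul_eq_mul, hcbar, Quotient.lift_mk, hA, mul_comm]
    rw [hsum]
    refine Submodule.sum_mem _ fun y _ => Submodule.smul_mem _ _ ?_
    exact Submodule.subset_span ⟨Quotient.mk _ y.1, hmemT y, rfl⟩
  letI : Fintype ↥(cbar '' T) := Fintype.ofFinite _
  have hrk : Module.finrank ℝ (LinearMap.range A.mulVecLin) ≤ (cbar '' T).ncard := by
    calc Module.finrank ℝ (LinearMap.range A.mulVecLin)
        ≤ Module.finrank ℝ (Submodule.span ℝ (cbar '' T)) := Submodule.finrank_mono hrange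
      _ ≤ (cbar '' T).toFinset.card := finrank_span_le_card _
      _ = (cbar '' T).ncard := (Set.ncard_eq_toFinset_card' _).symm
  have hne : (Quotient.mk (annSetoid R) (0:R)) ≠ (Quotient.mk (annSetoid R) (1:R)) := by
    intro h
    have h2 := Quotient.exact h 1
    simp only [mul_zero, mul_one, true_iff] at h2
    exact one_ne_zero h2
  have hTcard : T.ncard = Nat.card (Quotient (annSetoid R)) - 2 := by
    have : T = Set.univ \ {Quotient.mk _ (0:R), Quotient.mk _ (1:R)} := by
      ext q
      simp [hT, and_comm]
    rw [this, Set.ncard_diff (Set.subset_univ _), Set.ncard_univ, Set.ncard_pair hne]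
  have h2le : 2 ≤ Nat.card (Quotient (annSetoid R)) := by
    have := Set.ncard_le_ncard (Set.subset_univ
      ({Quotient.mk _ (0:R), Quotient.mk _ (1:R)} : Set (Quotient (annSetoid R))))
      (Set.finite_univ)
    rw [Set.ncard_univ, Set.ncard_pair hne] at this
    exact this
  have himg : (cbar '' T).ncard ≤ T.ncard := Set.ncard_image_le T.toFinite
  have hcount : Fintype.card R = Fintype.card V + Fintype.card Rˣ + 1 := card_partition R
  have hcR : Nat.card R = Fintype.card R := Nat.card_eq_fintype_card
  have hcU : Nat.card Rˣ = Fintype.card Rˣ := Nat.card_eq_fintype_card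
  show (Nat.card R : ℤ) - Nat.card Rˣ - Nat.card (Quotient (annSetoid R)) + 1
      ≤ (Module.finrank ℝ (LinearMap.ker A.mulVecLin) : ℤ)
  omega

lemma quot_card_le {r : ℕ} (R : Type) [CommRing R]
    (Ri : Fin r → Type) [∀ i, CommRing (Ri i)] [∀ i, Finite (Ri i)]
    (e : R ≃+* ∀ i, Ri i) :
    Nat.card (Quotient (annSetoid R)) ≤ ∏ i, Nat.card (Quotient (annSetoid (Ri i))) := by
  classical
  have hsingle : ∀ (i : Fin r) (z : Ri i) (v : ∀ j, Ri j),
      Pi.single i z * v = Pi.single i (z * v i) := by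
    intro i z v
    funext j
    by_cases h : j = i
    · subst h; simp
    · simp [Pi.single_eq_of_ne h]
  have hsz : ∀ (i : Fin r) (c : Ri i), Pi.single i c = 0 ↔ c = 0 := by
    intro i c
    constructor
    · intro h
      have := congrFun h i
      simpa using this
    · rintro rfl; simp
  have hcomp : ∀ (x y : R), (annSetoid R) x y → ∀ i, (annSetoid (Ri i)) (e x i) (e y i) := by
    intro x y hxy i z
    have key : ∀ w : R, (z * e w i = 0) ↔ ((e.symm (Pi.single i z)) * w = 0) := by
      intro w
      rw [← map_eq_zero_iff e e.injective, map_mul, RingEquiv.apply_symm_apply,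
        hsingle i z (e w), hsz]
    rw [key x, key y]
    exact hxy _
  set φ : Quotient (annSetoid R) → ∀ i, Quotient (annSetoid (Ri i)) :=
    Quotient.lift (fun x : R => fun i => Quotient.mk _ (e x i))
      (fun x y hxy => funext fun i => Quotient.sound (hcomp x y hxy i)) with hφ
  have hinj : Function.Injective φ := by
    intro q1 q2
    induction q1 using Quotient.ind
    induction q2 using Quotient.ind
    rename_i x y
    intro h
    simp only [hφ, Quotient.lift_mk] at h
    refine Quotient.sound fun w => ?_
    have hi : ∀ i, ∀ z : Ri i, z * e x i = 0 ↔ z * e y i = 0 :=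
      fun i => Quotient.exact (congrFun h i)
    have expand : ∀ v : R, (w * v = 0) ↔ ∀ i, e w i * e v i = 0 := by
      intro v
      rw [← map_eq_zero_iff e e.injective, map_mul, funext_iff]
      simp [Pi.mul_apply]
    rw [expand x, expand y]
    exact forall_congr' fun i => hi i (e w i)
  calc Nat.card (Quotient (annSetoid R))
      ≤ Nat.card (∀ i, Quotient (annSetoid (Ri i))) := Nat.card_le_card_of_injective φ hinj
    _ = ∏ i, Nat.card (Quotient (annSetoid (Ri i))) := Nat.card_pi

/-- For `R ≅ R₁ × ⋯ × R_r` with finite local rings `R_i`, the nullity of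
the zero-divisor graph `Γ(R)` is at least `∏ #R_i − ∏ #U(R_i) − ∏ #(R_i)_E + 1`. -/
theorem stmt7 (r : ℕ) (R : Type) [CommRing R] [Fintype R] [DecidableEq R] [Nontrivial R]
    (Ri : Fin r → Type) [∀ i, CommRing (Ri i)] [∀ i, Finite (Ri i)] [∀ i, IsLocalRing (Ri i)]
    (e : R ≃+* ∀ i, Ri i) :
    let V := {x : R // x ≠ 0 ∧ ∃ y, y ≠ 0 ∧ x * y = 0}
    let A : Matrix V V ℝ := fun x y => if x.1 * y.1 = 0 then 1 else 0
    ∏ i, (Nat.card (Ri i) : ℤ) - ∏ i, (Nat.card (Ri i)ˣ : ℤ)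
        - ∏ i, (Nat.card (Quotient (annSetoid (Ri i))) : ℤ) + 1
      ≤ (Module.finrank ℝ (LinearMap.ker A.mulVecLin) : ℤ) := by
  intro V A
  have h1 : (Nat.card R : ℤ) = ∏ i, (Nat.card (Ri i) : ℤ) := by
    rw [Nat.card_congr e.toEquiv, Nat.card_pi]
    push_cast
    rfl
  have h2 : (Nat.card Rˣ : ℤ) = ∏ i, (Nat.card (Ri i)ˣ : ℤ) := by
    rw [Nat.card_congr ((Units.mapEquiv e.toMulEquiv).toEquiv.trans (piUnitsEquiv Ri)),
      Nat.card_pi]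
    push_cast
    rfl
  have h3 : (Nat.card (Quotient (annSetoid R)) : ℤ)
      ≤ ∏ i, (Nat.card (Quotient (annSetoid (Ri i))) : ℤ) := by
    have := quot_card_le R Ri e
    calc (Nat.card (Quotient (annSetoid R)) : ℤ)
        ≤ (∏ i, Nat.card (Quotient (annSetoid (Ri i))) : ℕ) := by exact_mod_cast this
      _ = ∏ i, (Nat.card (Quotient (annSetoid (Ri i))) : ℤ) := by push_cast; rfl
  have hkey := key R
  calc ∏ i, (Nat.card (Ri i) : ℤ) - ∏ i, (Nat.card (Ri i)ˣ : ℤ)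
        - ∏ i, (Nat.card (Quotient (annSetoid (Ri i))) : ℤ) + 1
      ≤ (Nat.card R : ℤ) - Nat.card Rˣ - Nat.card (Quotient (annSetoid R)) + 1 := by
        rw [h1, h2]; linarith
    _ ≤ (Module.finrank ℝ (LinearMap.ker A.mulVecLin) : ℤ) := hkey
end

section
/- For t ≥ 1 and a prime p, the annihilator-equivalence classes of nonzero zero-divisors in ℤ_{p^t} are exactly the classes of p, p², …, p^{t−1}, and the class of p^k has exactly p^{t−k−1}(p−1) elements, namely {x : gcd(x, p^t) = p^k}. -/
section aux

variable {n : ℕ} [NeZero n]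

lemma key_s8 (r x : ZMod n) : x * r = 0 ↔ (n / Nat.gcd r.val n) ∣ x.val := by
  have hn : 0 < n := Nat.pos_of_ne_zero (NeZero.ne n)
  set d := Nat.gcd r.val n with hd
  have hd0 : 0 < d := Nat.gcd_pos_of_pos_right _ hn
  have hdn : d ∣ n := Nat.gcd_dvd_right _ _
  have hdr : d ∣ r.val := Nat.gcd_dvd_left _ _
  have h1 : x * r = ((x.val * r.val : ℕ) : ZMod n) := by
    push_cast [ZMod.natCast_zmod_val]; ring
  rw [h1, ZMod.natCast_eq_zero_iff]
  constructor
  · intro h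
    have hcop : Nat.Coprime (n / d) (r.val / d) :=
      (Nat.coprime_div_gcd_div_gcd (hd ▸ hd0)).symm
    refine hcop.dvd_of_dvd_mul_right ?_
    have h2 : d * (n / d) ∣ d * (x.val * (r.val / d)) := by
      rw [Nat.mul_div_cancel' hdn]
      have hr : r.val = d * (r.val / d) := (Nat.mul_div_cancel' hdr).symm
      have h3 : x.val * r.val = d * (x.val * (r.val / d)) := by
        conv_lhs => rw [hr]
        ring
      exact h3 ▸ h
    exact (Nat.mul_dvd_mul_iff_left hd0).mp h2
  · intro h
    have : (n / d) * d ∣ x.val * r.val := mul_dvd_mul h hdr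
    rwa [Nat.div_mul_cancel hdn] at this

lemma rel_iff (r s : ZMod n) :
    (∀ x : ZMod n, x * r = 0 ↔ x * s = 0) ↔ Nat.gcd r.val n = Nat.gcd s.val n := by
  have hn : 0 < n := Nat.pos_of_ne_zero (NeZero.ne n)
  constructor
  · intro h
    have main : ∀ a b : ZMod n, (∀ x : ZMod n, x * a = 0 ↔ x * b = 0) →
        n / Nat.gcd b.val n ∣ n / Nat.gcd a.val n := by
      intro a b hab
      set m := n / Nat.gcd a.val n with hm
      have hmn : m ∣ n := Nat.div_dvd_of_dvd (Nat.gcd_dvd_right _ _)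
      rcases lt_or_eq_of_le (Nat.le_of_dvd hn hmn) with hlt | heq
      · have hx : ((m : ZMod n)).val = m := ZMod.val_cast_of_lt hlt
        have := (hab (m : ZMod n)).mp (by rw [key_s8, hx])
        rw [key_s8, hx] at this
        exact this
      · rw [heq]; exact Nat.div_dvd_of_dvd (Nat.gcd_dvd_right _ _)
    have heq : n / Nat.gcd r.val n = n / Nat.gcd s.val n :=
      Nat.dvd_antisymm (main s r fun x => (h x).symm) (main r s h)
    have h1 : Nat.gcd r.val n = n / (n / Nat.gcd r.val n) :=
      (Nat.div_div_self (Nat.gcd_dvd_right _ _) hn.ne').symm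
    rw [h1, heq, Nat.div_div_self (Nat.gcd_dvd_right _ _) hn.ne']
  · intro h x
    rw [key_s8, key_s8, h]

end aux

/-- In `ℤ_{p^t}`, the annihilator classes of nonzero zero-divisors are exactly
the classes of `p, p², …, p^{t−1}`; the class of `p^k` has `p^{t−k−1}(p−1)` elements and
equals `{x : gcd(x, p^t) = p^k}`. -/
theorem stmt8 (p t : ℕ) (hp : p.Prime) (ht : 1 ≤ t) :
    (∀ x : ZMod (p ^ t), x ≠ 0 → (∃ y, y ≠ 0 ∧ x * y = 0) →
      ∃ k, 1 ≤ k ∧ k ≤ t - 1 ∧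
        (annSetoid (ZMod (p ^ t))).r x ((p ^ k : ℕ) : ZMod (p ^ t))) ∧
    (∀ k, 1 ≤ k → k ≤ t - 1 →
      (((p ^ k : ℕ) : ZMod (p ^ t)) ≠ 0 ∧
        ∃ y, y ≠ 0 ∧ ((p ^ k : ℕ) : ZMod (p ^ t)) * y = 0) ∧
      Nat.card {s : ZMod (p ^ t) //
          (annSetoid (ZMod (p ^ t))).r ((p ^ k : ℕ) : ZMod (p ^ t)) s}
        = p ^ (t - k - 1) * (p - 1) ∧
      {s : ZMod (p ^ t) | (annSetoid (ZMod (p ^ t))).r ((p ^ k : ℕ) : ZMod (p ^ t)) s}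
        = {x : ZMod (p ^ t) | Nat.gcd x.val (p ^ t) = p ^ k}) := by
  haveI : NeZero (p ^ t) := ⟨pow_ne_zero t hp.pos.ne'⟩
  set n := p ^ t with hn
  have hn1 : 1 < n := Nat.one_lt_pow (by omega) hp.one_lt
  have hcastval : ∀ k, k ≤ t - 1 → ((p ^ k : ℕ) : ZMod n).val = p ^ k := by
    intro k hk
    exact ZMod.val_cast_of_lt (Nat.pow_lt_pow_right hp.one_lt
      (lt_of_le_of_lt hk (Nat.sub_lt (by omega) one_pos)))
  have hgcdpk : ∀ k, k ≤ t - 1 → Nat.gcd (((p ^ k : ℕ) : ZMod n)).val n = p ^ k := by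
    intro k hk
    rw [hcastval k hk, hn]
    exact Nat.gcd_eq_left (pow_dvd_pow p (by omega))
  constructor
  · intro x hx ⟨y, hy, hxy⟩
    have hdvd : Nat.gcd x.val n ∣ p ^ t := by rw [← hn]; exact Nat.gcd_dvd_right x.val n
    obtain ⟨j, hjt, hjd⟩ := (Nat.dvd_prime_pow hp).mp hdvd
    have hxval : x.val ≠ 0 := fun h => hx (ZMod.val_injective n (by simp [h]))
    have hj1 : 1 ≤ j := by
      by_contra h
      have hj0 : j = 0 := by omega
      have : n / Nat.gcd x.val n ∣ y.val := (key_s8 x y).mp (by rwa [mul_comm] at hxy)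
      rw [hjd, hj0, pow_zero, Nat.div_one] at this
      have : y.val = 0 := Nat.eq_zero_of_dvd_of_lt this (ZMod.val_lt y)
      exact hy (ZMod.val_injective n (by simp [this]))
    have hjt1 : j ≤ t - 1 := by
      by_contra h
      have : j = t := by omega
      have hd : Nat.gcd x.val n = n := by rw [hjd, this, hn]
      have := Nat.gcd_dvd_left x.val n
      rw [hd] at this
      exact hxval.elim (by
        have := Nat.le_of_dvd (Nat.pos_of_ne_zero hxval) this
        have := ZMod.val_lt x
        omega)
    refine ⟨j, hj1, hjt1, ?_⟩
    show ∀ z, _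
    rw [rel_iff]
    rw [hgcdpk j hjt1, hjd]
  · intro k hk1 hk2
    have hkt : k ≤ t := by omega
    have hpk : ((p ^ k : ℕ) : ZMod n) ≠ 0 := by
      rw [Ne, ZMod.natCast_eq_zero_iff]
      intro h
      have := Nat.le_of_dvd (pow_pos hp.pos k) h
      exact absurd this (not_le.mpr (Nat.pow_lt_pow_right hp.one_lt (by omega)))
    have hsetEq : {s : ZMod n | (annSetoid (ZMod n)).r ((p ^ k : ℕ) : ZMod n) s}
        = {x : ZMod n | Nat.gcd x.val n = p ^ k} := by
      ext s
      show (∀ z, _) ↔ _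
      rw [rel_iff, hgcdpk k hk2]
      exact eq_comm
    refine ⟨⟨hpk, ?_⟩, ?_, hsetEq⟩
    · refine ⟨((p ^ (t - k) : ℕ) : ZMod n), ?_, ?_⟩
      · rw [Ne, ZMod.natCast_eq_zero_iff]
        intro h
        have := Nat.le_of_dvd (pow_pos hp.pos _) h
        exact absurd this (not_le.mpr (Nat.pow_lt_pow_right hp.one_lt (by omega)))
      · rw [← Nat.cast_mul, ← pow_add, show k + (t - k) = t by omega, ← hn,
          ZMod.natCast_eq_zero_iff]
    · have hcard : Nat.card {s : ZMod n //
          (annSetoid (ZMod n)).r ((p ^ k : ℕ) : ZMod n) s}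
          = Nat.card {x : ZMod n // Nat.gcd x.val n = p ^ k} := by
        apply Nat.card_congr
        apply Equiv.subtypeEquivRight
        intro s
        have := Set.ext_iff.mp hsetEq s
        exact this
      rw [hcard, Nat.card_eq_fintype_card, Fintype.card_subtype]
      have hbij : (Finset.univ.filter fun x : ZMod n => Nat.gcd x.val n = p ^ k).card
          = ((Finset.range n).filter fun m => Nat.gcd n m = p ^ k).card := by
        apply Finset.card_bij (fun x _ => x.val)
        · intro a ha
          simp only [Finset.mem_filter, Finset.mem_univ, true_and] at ha
          simp only [Finset.mem_filter, Finset.mem_range]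
          exact ⟨ZMod.val_lt a, by rw [Nat.gcd_comm]; exact ha⟩
        · intro a _ b _ h
          exact ZMod.val_injective n h
        · intro b hb
          simp only [Finset.mem_filter, Finset.mem_range] at hb
          refine ⟨(b : ZMod n), ?_, ZMod.val_cast_of_lt hb.1⟩
          simp only [Finset.mem_filter, Finset.mem_univ, true_and]
          rw [ZMod.val_cast_of_lt hb.1, Nat.gcd_comm]
          exact hb.2
      rw [hbij, ← Nat.totient_div_of_dvd (hn ▸ pow_dvd_pow p hkt), hn,
        Nat.pow_div hkt hp.pos, Nat.totient_prime_pow hp (by omega)]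
end

section
/- For a prime p, the nullity (multiplicity of eigenvalue 0) of the adjacency matrix of the zero-divisor graph Γ(ℤ_p × ℤ_p × ℤ_p) equals 3(p+1)(p−2) = p³ − (p−1)³ − 7. -/
namespace Stmt13Aux

variable (p : ℕ) [Fact p.Prime]

abbrev R := ZMod p × ZMod p × ZMod p
abbrev V := {x : R p // x ≠ 0 ∧ ∃ y, y ≠ 0 ∧ x * y = 0}
abbrev W := {s : Bool × Bool × Bool // s ≠ (false, false, false) ∧ s ≠ (true, true, true)}

lemma card_W : Fintype.card W = 6 := by decide

variable {p}

lemma mem_V_iff (x : R p) :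
    (x ≠ 0 ∧ ∃ y, y ≠ 0 ∧ x * y = 0) ↔
      (x ≠ 0 ∧ (x.1 = 0 ∨ x.2.1 = 0 ∨ x.2.2 = 0)) := by
  constructor
  · rintro ⟨hx, y, hy, hxy⟩
    refine ⟨hx, ?_⟩
    by_contra h
    push_neg at h
    obtain ⟨h1, h2, h3⟩ := h
    apply hy
    have e1 : x.1 * y.1 = 0 := congrArg Prod.fst hxy
    have e2 : x.2.1 * y.2.1 = 0 := congrArg (Prod.fst ∘ Prod.snd) hxy
    have e3 : x.2.2 * y.2.2 = 0 := congrArg (Prod.snd ∘ Prod.snd) hxy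
    have : y.1 = 0 := by rcases mul_eq_zero.1 e1 with h | h; exact absurd h h1; exact h
    have : y.2.1 = 0 := by rcases mul_eq_zero.1 e2 with h | h; exact absurd h h2; assumption
    have : y.2.2 = 0 := by rcases mul_eq_zero.1 e3 with h | h; exact absurd h h3; assumption
    ext <;> assumption
  · rintro ⟨hx, h⟩
    refine ⟨hx, ?_⟩
    rcases h with h | h | h
    · exact ⟨(1, 0, 0), by simp [Prod.ext_iff], by ext <;> simp [h]⟩
    · exact ⟨(0, 1, 0), by simp [Prod.ext_iff], by ext <;> simp [h]⟩
    · exact ⟨(0, 0, 1), by simp [Prod.ext_iff], by ext <;> simp [h]⟩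

end Stmt13Aux

namespace Stmt13Aux
variable {p : ℕ} [Fact p.Prime]

def pat (x : V p) : W :=
  ⟨(decide (x.1.1 = 0), decide (x.1.2.1 = 0), decide (x.1.2.2 = 0)), by
    obtain ⟨x, hx⟩ := x
    rw [mem_V_iff] at hx
    obtain ⟨hx0, h⟩ := hx
    constructor
    · intro hc
      simp only [Prod.mk.injEq, decide_eq_false_iff_not] at hc
      rcases h with h | h | h
      · exact hc.1 h
      · exact hc.2.1 h
      · exact hc.2.2 h
    · intro hc
      simp only [Prod.mk.injEq, decide_eq_true_eq] at hc
      exact hx0 (by ext <;> simp [hc.1, hc.2.1, hc.2.2])⟩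

def bv (b : Bool) : ZMod p := if b then 0 else 1

lemma bv_eq_zero_iff (b : Bool) : (bv b : ZMod p) = 0 ↔ b = true := by
  cases b <;> simp [bv]

def sec (s : W) : V p :=
  ⟨(bv s.1.1, bv s.1.2.1, bv s.1.2.2), by
    rw [mem_V_iff]
    obtain ⟨⟨a, b, c⟩, h1, h2⟩ := s
    constructor
    · intro hc
      apply h2
      have e1 : (bv a : ZMod p) = 0 := congrArg Prod.fst hc
      have e2 : (bv b : ZMod p) = 0 := congrArg (Prod.fst ∘ Prod.snd) hc
      have e3 : (bv c : ZMod p) = 0 := congrArg (Prod.snd ∘ Prod.snd) hc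
      rw [bv_eq_zero_iff] at e1 e2 e3
      subst e1; subst e2; subst e3; rfl
    · by_contra hc
      push_neg at hc
      obtain ⟨c1, c2, c3⟩ := hc
      simp only [ne_eq, bv_eq_zero_iff] at c1 c2 c3
      simp only [Bool.not_eq_true] at c1 c2 c3
      exact h1 (by simp [c1, c2, c3])⟩

lemma pat_sec (s : W) : pat (sec s : V p) = s := by
  obtain ⟨⟨a, b, c⟩, h1, h2⟩ := s
  apply Subtype.ext
  simp only [pat, sec]
  have : ∀ b : Bool, decide ((bv b : ZMod p) = 0) = b := by
    intro b; cases b <;> simp [bv]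
  simp [this]
  exact ⟨this a, this b, this c⟩

def disj (s t : W) : Bool :=
  (s.1.1 || t.1.1) && (s.1.2.1 || t.1.2.1) && (s.1.2.2 || t.1.2.2)

lemma adj_iff (x y : V p) : x.1 * y.1 = 0 ↔ disj (pat x) (pat y) = true := by
  have : x.1 * y.1 = 0 ↔ (x.1.1 * y.1.1 = 0 ∧ x.1.2.1 * y.1.2.1 = 0 ∧ x.1.2.2 * y.1.2.2 = 0) := by
    constructor
    · intro h
      exact ⟨congrArg Prod.fst h, congrArg (Prod.fst ∘ Prod.snd) h,
        congrArg (Prod.snd ∘ Prod.snd) h⟩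
    · rintro ⟨h1, h2, h3⟩; ext <;> assumption
  rw [this]
  simp only [disj, pat, mul_eq_zero, Bool.and_eq_true, Bool.or_eq_true, decide_eq_true_eq]
  tauto

end Stmt13Aux

namespace Stmt13Aux
variable {p : ℕ} [Fact p.Prime]

def w100 : W := ⟨(true, false, false), by decide⟩
def w010 : W := ⟨(false, true, false), by decide⟩
def w001 : W := ⟨(false, false, true), by decide⟩
def w110 : W := ⟨(true, true, false), by decide⟩
def w101 : W := ⟨(true, false, true), by decide⟩
def w011 : W := ⟨(false, true, true), by decide⟩

lemma univ_W : (Finset.univ : Finset W) = {w100, w010, w001, w110, w101, w011} := by decide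

lemma sum_W {M : Type*} [AddCommMonoid M] (f : W → M) :
    ∑ s : W, f s = f w100 + f w010 + f w001 + f w110 + f w101 + f w011 := by
  rw [univ_W, Finset.sum_insert (by decide), Finset.sum_insert (by decide),
    Finset.sum_insert (by decide), Finset.sum_insert (by decide),
    Finset.sum_insert (by decide), Finset.sum_singleton]

  abel

def Phi : (V p → ℝ) →ₗ[ℝ] (W → ℝ) where
  toFun v := fun s => ∑ y ∈ Finset.univ.filter (fun y => pat y = s), v y
  map_add' u v := by funext s; simp [Finset.sum_add_distrib]
  map_smul' c v := by funext s; simp [Finset.mul_sum]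

lemma Phi_apply (v : V p → ℝ) (s : W) :
    Phi v s = ∑ y ∈ Finset.univ.filter (fun y => pat y = s), v y := rfl

lemma expand (v : V p → ℝ) (x : V p) :
    ∑ y, (if x.1 * y.1 = 0 then (1:ℝ) else 0) * v y
      = ∑ s : W, (if disj (pat x) s then (1:ℝ) else 0) * Phi v s := by
  rw [← Finset.sum_fiberwise Finset.univ pat
    (fun y => (if x.1 * y.1 = 0 then (1:ℝ) else 0) * v y)]
  refine Finset.sum_congr rfl fun s _ => ?_
  rw [Phi_apply, Finset.mul_sum]
  refine Finset.sum_congr rfl fun y hy => ?_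
  have hpy : pat y = s := by simpa using (Finset.mem_filter.1 hy).2
  simp only [adj_iff, hpy]

lemma key1 (v : V p → ℝ)
    (hv : ∀ x : V p, (∑ y, (if x.1 * y.1 = 0 then (1:ℝ) else 0) * v y) = 0) :
    ∀ s : W, Phi v s = 0 := by
  have E : ∀ t : W, ∑ s : W, (if disj t s then (1:ℝ) else 0) * Phi v s = 0 := by
    intro t
    have h := hv (sec t)
    rw [expand, pat_sec] at h
    exact h
  have e110 : Phi v w110 = 0 := by
    have h := E w001; rw [sum_W] at h
    simpa [disj, w100, w010, w001, w110, w101, w011] using h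
  have e101 : Phi v w101 = 0 := by
    have h := E w010; rw [sum_W] at h
    simpa [disj, w100, w010, w001, w110, w101, w011] using h
  have e011 : Phi v w011 = 0 := by
    have h := E w100; rw [sum_W] at h
    simpa [disj, w100, w010, w001, w110, w101, w011] using h
  have e001 : Phi v w001 = 0 := by
    have h := E w110; rw [sum_W] at h
    simp only [disj, w100, w010, w001, w110, w101, w011] at h e101 e011 ⊢
    simp at h
    linarith [h, e101, e011]
  have e010 : Phi v w010 = 0 := by
    have h := E w101; rw [sum_W] at h
    simp only [disj, w100, w010, w001, w110, w101, w011] at h e110 e011 ⊢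
    simp at h
    linarith [h, e110, e011]
  have e100 : Phi v w100 = 0 := by
    have h := E w011; rw [sum_W] at h
    simp only [disj, w100, w010, w001, w110, w101, w011] at h e110 e101 ⊢
    simp at h
    linarith [h, e110, e101]
  intro s
  obtain ⟨⟨a, b, c⟩, h⟩ := s
  cases a <;> cases b <;> cases c
  · exact absurd rfl h.1
  · exact e001
  · exact e010
  · exact e011
  · exact e100
  · exact e101
  · exact e110
  · exact absurd rfl h.2

lemma key2 (v : V p → ℝ) (hz : ∀ s : W, Phi v s = 0) (x : V p) :
    ∑ y, (if x.1 * y.1 = 0 then (1:ℝ) else 0) * v y = 0 := by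
  rw [expand]
  simp only [hz, mul_zero, Finset.sum_const_zero]

end Stmt13Aux

namespace Stmt13Aux
variable {p : ℕ} [Fact p.Prime]

lemma Phi_surjective : Function.Surjective (Phi (p := p)) := by
  intro w
  classical
  refine ⟨fun y => if sec (pat y) = y then w (pat y) else 0, ?_⟩
  funext s
  rw [Phi_apply]
  have : ∀ y ∈ Finset.univ.filter (fun y : V p => pat y = s),
      (if sec (pat y) = y then w (pat y) else 0) = (if sec s = y then w s else 0) := by
    intro y hy
    have hpy : pat y = s := by simpa using (Finset.mem_filter.1 hy).2
    rw [hpy]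
  rw [Finset.sum_congr rfl this, Finset.sum_ite_eq]
  rw [if_pos]
  simp [pat_sec]

lemma card_V : Fintype.card (V p) = p ^ 3 - (p - 1) ^ 3 - 1 := by
  classical
  have hcR : Fintype.card (R p) = p ^ 3 := by
    simp [ZMod.card]; ring
  have hq : Fintype.card {a : ZMod p // a ≠ 0} = p - 1 := by
    have := Fintype.card_subtype_compl (fun a : ZMod p => a = 0)
    rw [Fintype.card_subtype_eq, ZMod.card] at this
    exact this
  have hQ : Fintype.card {x : R p // x.1 ≠ 0 ∧ x.2.1 ≠ 0 ∧ x.2.2 ≠ 0} = (p-1)^3 := by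
    have e1 : {x : R p // x.1 ≠ 0 ∧ x.2.1 ≠ 0 ∧ x.2.2 ≠ 0}
        ≃ {a : ZMod p // a ≠ 0} × {y : ZMod p × ZMod p // y.1 ≠ 0 ∧ y.2 ≠ 0} :=
      Equiv.subtypeProdEquivProd (p := fun a : ZMod p => a ≠ 0)
        (q := fun y : ZMod p × ZMod p => y.1 ≠ 0 ∧ y.2 ≠ 0)
    have e2 : {y : ZMod p × ZMod p // y.1 ≠ 0 ∧ y.2 ≠ 0}
        ≃ {a : ZMod p // a ≠ 0} × {a : ZMod p // a ≠ 0} :=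
      Equiv.subtypeProdEquivProd (p := fun a : ZMod p => a ≠ 0)
        (q := fun a : ZMod p => a ≠ 0)
    rw [Fintype.card_congr e1, Fintype.card_prod, Fintype.card_congr e2,
      Fintype.card_prod, hq]
    ring
  have hcompl : Fintype.card {x : R p // ¬ (x ≠ 0 ∧ ∃ y, y ≠ 0 ∧ x * y = 0)}
      = 1 + (p-1)^3 := by
    have hiff : ∀ x : R p, (¬ (x ≠ 0 ∧ ∃ y, y ≠ 0 ∧ x * y = 0))
        ↔ (x = 0 ∨ (x.1 ≠ 0 ∧ x.2.1 ≠ 0 ∧ x.2.2 ≠ 0)) := by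
      intro x
      rw [mem_V_iff]
      by_cases hx : x = 0
      · simp [hx]
      · simp only [hx, ne_eq, not_false_eq_true, true_and, false_or]
        tauto
    rw [Fintype.card_congr (Equiv.subtypeEquivRight hiff)]
    rw [Fintype.card_subtype_or_disjoint]
    · rw [Fintype.card_subtype_eq, hQ]
    · rintro q hq1 hq2 x hx
      have h1 := hq1 x hx
      have h2 := hq2 x hx
      simp only at h1 h2
      exact absurd (by rw [h1]; rfl : (x.1 = 0)) h2.1
  have hsum := Fintype.card_subtype_compl (fun x : R p => ¬ (x ≠ 0 ∧ ∃ y, y ≠ 0 ∧ x * y = 0))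
  rw [hcompl, hcR] at hsum
  have hle : 1 + (p-1)^3 ≤ p ^ 3 := by
    have hp : 2 ≤ p := (Fact.out : p.Prime).two_le
    have : (p-1)^3 < p^3 := by
      apply Nat.pow_lt_pow_left <;> omega
    omega
  have : Fintype.card {x : R p // ¬¬ (x ≠ 0 ∧ ∃ y, y ≠ 0 ∧ x * y = 0)} = Fintype.card (V p) :=
    Fintype.card_congr (Equiv.subtypeEquivRight (fun x => not_not))
  omega

end Stmt13Aux

namespace Stmt13Aux
variable {p : ℕ} [Fact p.Prime]

lemma nullity :
    Module.finrank ℝ (LinearMap.ker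
      (Matrix.mulVecLin (fun x y => if x.1 * y.1 = 0 then (1:ℝ) else 0 : Matrix (V p) (V p) ℝ)))
      = Fintype.card (V p) - 6 := by
  classical
  have hmv : ∀ (v : V p → ℝ) (x : V p),
      Matrix.mulVec (fun x y => if x.1 * y.1 = 0 then (1:ℝ) else 0 : Matrix (V p) (V p) ℝ) v x
        = ∑ y, (if x.1 * y.1 = 0 then (1:ℝ) else 0) * v y := by
    intro v x; rfl
  have hker : LinearMap.ker
      (Matrix.mulVecLin (fun x y => if x.1 * y.1 = 0 then (1:ℝ) else 0 : Matrix (V p) (V p) ℝ))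
      = LinearMap.ker (Phi (p := p)) := by
    ext v
    simp only [LinearMap.mem_ker, Matrix.mulVecLin_apply]
    constructor
    · intro h
      funext s
      refine key1 v (fun x => ?_) s
      have hx := congrFun h x
      rw [← hmv]
      exact hx
    · intro h
      funext x
      have hx := key2 v (fun s => congrFun h s) x
      rw [← hmv] at hx
      exact hx
  rw [hker]
  have hrn := LinearMap.finrank_range_add_finrank_ker (Phi (p := p))
  have hrange : LinearMap.range (Phi (p := p)) = ⊤ := LinearMap.range_eq_top.2 Phi_surjective
  rw [hrange, finrank_top, Module.finrank_fintype_fun_eq_card, card_W,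
    Module.finrank_fintype_fun_eq_card] at hrn
  omega

end Stmt13Aux


/-- The nullity of the zero-divisor graph `Γ(ℤ_p × ℤ_p × ℤ_p)` equals
`3(p+1)(p−2) = p³ − (p−1)³ − 7`. -/
theorem stmt13 (p : ℕ) [Fact p.Prime] :
    let R := ZMod p × ZMod p × ZMod p
    let V := {x : R // x ≠ 0 ∧ ∃ y, y ≠ 0 ∧ x * y = 0}
    let A : Matrix V V ℝ := fun x y => if x.1 * y.1 = 0 then 1 else 0
    Module.finrank ℝ (LinearMap.ker A.mulVecLin) = 3 * (p + 1) * (p - 2) ∧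
    (Module.finrank ℝ (LinearMap.ker A.mulVecLin) : ℤ) =
      (p : ℤ) ^ 3 - ((p : ℤ) - 1) ^ 3 - 7 := by
  intro R V A
  have hp : 2 ≤ p := (Fact.out : p.Prime).two_le
  obtain ⟨k, rfl⟩ : ∃ k, p = k + 2 := ⟨p - 2, by omega⟩
  have h1 : Module.finrank ℝ (LinearMap.ker A.mulVecLin)
      = Fintype.card (Stmt13Aux.V (k + 2)) - 6 := Stmt13Aux.nullity
  have hval : Module.finrank ℝ (LinearMap.ker A.mulVecLin) = 3 * k ^ 2 + 9 * k := by
    rw [h1, Stmt13Aux.card_V]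
    have e1 : (k + 2) ^ 3 = k ^ 3 + 6 * k ^ 2 + 12 * k + 8 := by ring
    have e2 : (k + 2 - 1) ^ 3 = k ^ 3 + 3 * k ^ 2 + 3 * k + 1 := by
      have : k + 2 - 1 = k + 1 := rfl
      rw [this]; ring
    rw [e1, e2]
    generalize k ^ 3 = a
    generalize k ^ 2 = b
    omega
  constructor
  · rw [hval]
    have : k + 2 - 2 = k := rfl
    rw [this]; ring
  · rw [hval]
    push_cast
    ring
end

section
/- Let A ∈ ℝ^{m×m}, B ∈ ℝ^{n×n}, a, c ∈ ℝ^m, b, d ∈ ℝ^n, and let M be the block matrix [[A, a dᵗ], [b cᵗ, B]]. Set Ã = a cᵗ − A and B̃ = b dᵗ − B. Then χ_M(x) = (−1)^m χ_Ã(−x) χ_B(x) + (−1)^n χ_A(x) χ_B̃(−x) − (−1)^{m+n} χ_Ã(−x) χ_B̃(−x), where χ_N(x) = det(xI − N). -/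
open Matrix

lemma aux_det_add_vecMulVec {K : Type*} [Field K] {m : Type*} [Fintype m] [DecidableEq m]
    {P : Matrix m m K} (hP : IsUnit P.det) (u v : m → K) :
    (P + vecMulVec u v).det = P.det * (1 + v ⬝ᵥ P⁻¹ *ᵥ u) := by
  rw [vecMulVec_eq Unit u v]
  rw [det_add_replicateCol_mul_replicateRow hP]
  congr 1
  rw [det_unique]
  simp only [Matrix.add_apply, Matrix.one_apply_eq, Matrix.mul_apply, Matrix.replicateRow_apply,
    Matrix.replicateCol_apply, dotProduct, mulVec, Finset.sum_mul, Finset.mul_sum]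
  rw [Finset.sum_comm]
  exact congrArg _ (Finset.sum_congr rfl fun j _ => Finset.sum_congr rfl fun k _ => by ring)

lemma aux_key {K : Type*} [Field K] {m n : Type*} [Fintype m] [Fintype n]
    [DecidableEq m] [DecidableEq n]
    (P : Matrix m m K) (Q : Matrix n n K) (a c : m → K) (b d : n → K)
    (hP : IsUnit P.det) (hQ : IsUnit Q.det) :
    (fromBlocks P (-(vecMulVec a d)) (-(vecMulVec b c)) Q).det =
      (P + vecMulVec a c).det * Q.det + P.det * (Q + vecMulVec b d).det
        - (P + vecMulVec a c).det * (Q + vecMulVec b d).det := by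
  have hQi : Invertible Q := Q.invertibleOfIsUnitDet hQ
  set α := c ⬝ᵥ P⁻¹ *ᵥ a with hα
  set β := d ⬝ᵥ Q⁻¹ *ᵥ b with hβ
  have h1 : (P + vecMulVec a c).det = P.det * (1 + α) := aux_det_add_vecMulVec hP a c
  have h2 : (Q + vecMulVec b d).det = Q.det * (1 + β) := aux_det_add_vecMulVec hQ b d
  have hmid : (-(vecMulVec a d)) * ⅟Q * (-(vecMulVec b c)) = β • vecMulVec a c := by
    rw [invOf_eq_nonsing_inv]
    ext i j
    simp only [Matrix.mul_apply, Matrix.neg_apply, vecMulVec_apply, Matrix.smul_apply, smul_eq_mul,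
      hβ, dotProduct, mulVec, Finset.sum_mul, Finset.mul_sum]
    rw [Finset.sum_comm]
    exact Finset.sum_congr rfl fun k _ => Finset.sum_congr rfl fun l _ => by ring
  have h3 : (fromBlocks P (-(vecMulVec a d)) (-(vecMulVec b c)) Q).det
      = Q.det * (P.det * (1 + (-β • c) ⬝ᵥ P⁻¹ *ᵥ a)) := by
    rw [det_fromBlocks₂₂, hmid]
    congr 1
    rw [show P - β • vecMulVec a c = P + vecMulVec a (-β • c) by
      ext i j; simp [vecMulVec_apply, sub_eq_add_neg]]
    exact aux_det_add_vecMulVec hP a (-β • c)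
  have h4 : (-β • c) ⬝ᵥ P⁻¹ *ᵥ a = -β * α := by
    rw [hα]
    simp only [dotProduct, Finset.mul_sum, neg_mul, ← Finset.sum_neg_distrib]
    exact Finset.sum_congr rfl fun k _ => by simp [Pi.smul_apply]; ring
  rw [h1, h2, h3, h4]
  ring

open Polynomial

lemma aux_map_vecMulVec {R S : Type*} [CommRing R] [CommRing S] {m n : Type*}
    (f : R →+* S) (u : m → R) (v : n → R) :
    (vecMulVec u v).map f = vecMulVec (f ∘ u) (f ∘ v) := by
  ext i j; simp [vecMulVec_apply]

lemma aux_comp (k : ℕ) (A : Matrix (Fin k) (Fin k) ℝ) (u v : Fin k → ℝ) :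
    (vecMulVec u v - A).charpoly.comp (-X) =
      (-1 : ℝ[X]) ^ k * (charmatrix A + vecMulVec (C ∘ u) (C ∘ v)).det := by
  have h0 : (vecMulVec u v - A).charpoly.comp (-X)
      = (eval₂RingHom C (-X : ℝ[X])) (charmatrix (vecMulVec u v - A)).det := rfl
  rw [h0, RingHom.map_det]
  have h1 : (charmatrix (vecMulVec u v - A)).map (eval₂RingHom C (-X : ℝ[X]))
      = -(charmatrix A + vecMulVec (C ∘ u) (C ∘ v)) := by
    ext i j
    by_cases h : i = j
    · subst h
      simp [charmatrix_apply_eq, Matrix.map_apply, vecMulVec_apply, Matrix.sub_apply, _root_.map_mul]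
      ring
    · simp [charmatrix_apply_ne _ _ _ h, Matrix.map_apply, vecMulVec_apply, Matrix.sub_apply, h,
        _root_.map_mul]
      ring
  rw [RingHom.mapMatrix_apply, h1, det_neg, Fintype.card_fin]

lemma aux_keyPoly (m n : ℕ) (A : Matrix (Fin m) (Fin m) ℝ) (B : Matrix (Fin n) (Fin n) ℝ)
    (u v : Fin m → ℝ[X]) (w z : Fin n → ℝ[X]) :
    (fromBlocks (charmatrix A) (-(vecMulVec u z)) (-(vecMulVec w v)) (charmatrix B)).det =
      (charmatrix A + vecMulVec u v).det * (charmatrix B).det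
      + (charmatrix A).det * (charmatrix B + vecMulVec w z).det
      - (charmatrix A + vecMulVec u v).det * (charmatrix B + vecMulVec w z).det := by
  set φ : ℝ[X] →+* RatFunc ℝ := algebraMap ℝ[X] (RatFunc ℝ) with hφ
  have hinj : Function.Injective φ := IsFractionRing.injective _ _
  apply hinj
  simp only [map_add, map_sub, _root_.map_mul, RingHom.map_det, RingHom.mapMatrix_apply]
  have hmapP : ∀ {k : ℕ} (M N : Matrix (Fin k) (Fin k) ℝ[X]),
      (M + N).map φ = M.map φ + N.map φ := fun M N => by
    ext i j; simp [Matrix.map_apply]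
  have hmapneg : ∀ {k l : ℕ} (M : Matrix (Fin k) (Fin l) ℝ[X]),
      (-M).map φ = -(M.map φ) := fun M => by
    ext i j; simp [Matrix.map_apply]
  have hP : IsUnit ((charmatrix A).map φ).det := by
    rw [← RingHom.mapMatrix_apply, ← RingHom.map_det]
    exact (isUnit_iff_ne_zero).2 fun h => (A.charpoly_monic.ne_zero)
      (hinj (by simpa [Matrix.charpoly] using h))
  have hQ : IsUnit ((charmatrix B).map φ).det := by
    rw [← RingHom.mapMatrix_apply, ← RingHom.map_det]
    exact (isUnit_iff_ne_zero).2 fun h => (B.charpoly_monic.ne_zero)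
      (hinj (by simpa [Matrix.charpoly] using h))
  rw [fromBlocks_map, hmapneg, hmapneg, aux_map_vecMulVec, aux_map_vecMulVec,
    aux_map_vecMulVec, aux_map_vecMulVec]
  exact aux_key _ _ _ _ _ _ hP hQ


open Polynomial in
/-- Hwang–Park: characteristic polynomial of a generalized complete
product of matrices: for `M = [[A, a dᵗ], [b cᵗ, B]]`, `Ã = a cᵗ − A`, `B̃ = b dᵗ − B`,
`χ_M(x) = (−1)^m χ_Ã(−x) χ_B(x) + (−1)^n χ_A(x) χ_B̃(−x) − (−1)^{m+n} χ_Ã(−x) χ_B̃(−x)`. -/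
theorem stmt15 (m n : ℕ) (A : Matrix (Fin m) (Fin m) ℝ) (B : Matrix (Fin n) (Fin n) ℝ)
    (a c : Fin m → ℝ) (b d : Fin n → ℝ) :
    (Matrix.fromBlocks A (Matrix.vecMulVec a d) (Matrix.vecMulVec b c) B).charpoly =
      (-1 : ℝ[X]) ^ m * ((Matrix.vecMulVec a c - A).charpoly.comp (-X)) * B.charpoly
      + (-1 : ℝ[X]) ^ n * A.charpoly * ((Matrix.vecMulVec b d - B).charpoly.comp (-X))
      - (-1 : ℝ[X]) ^ (m + n) * ((Matrix.vecMulVec a c - A).charpoly.comp (-X))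
          * ((Matrix.vecMulVec b d - B).charpoly.comp (-X)) := by
  have hL : (Matrix.fromBlocks A (Matrix.vecMulVec a d) (Matrix.vecMulVec b c) B).charpoly
      = (fromBlocks (charmatrix A) (-(vecMulVec (⇑C ∘ a) (⇑C ∘ d)))
          (-(vecMulVec (⇑C ∘ b) (⇑C ∘ c))) (charmatrix B)).det := by
    unfold Matrix.charpoly
    rw [charmatrix_fromBlocks, aux_map_vecMulVec C a d, aux_map_vecMulVec C b c]
  have h2 := aux_comp m A a c
  have h3 := aux_comp n B b d
  have hp : A.charpoly = (charmatrix A).det := rfl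
  have hq : B.charpoly = (charmatrix B).det := rfl
  rw [hL, aux_keyPoly, h2, h3, hp, hq]
  rcases Nat.even_or_odd m with hm | hm <;> rcases Nat.even_or_odd n with hn | hn <;>
    simp only [hm.neg_one_pow, hn.neg_one_pow, pow_add, Even.neg_one_pow, Odd.neg_one_pow,
      hm, hn] <;> ring
end

section
/- Let G₁, G₂ be finite simple graphs on n₁ and n₂ vertices. Then the characteristic polynomial of the join (complete product) G₁ ∇ G₂ satisfies χ_{G₁∇G₂}(x) = (−1)^{n₂} χ_{G₁}(x) χ_{\overline{G₂}}(−x−1) + (−1)^{n₁} χ_{G₂}(x) χ_{\overline{G₁}}(−x−1) − (−1)^{n₁+n₂} χ_{\overline{G₁}}(−x−1) χ_{\overline{G₂}}(−x−1). -/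
open Polynomial Matrix

namespace Stmt16Aux

variable {m n : Type} [Fintype m] [Fintype n] [DecidableEq m] [DecidableEq n]

lemma eval_charpoly (M : Matrix m m ℝ) (x : ℝ) :
    (M.charpoly).eval x = (x • (1 : Matrix m m ℝ) - M).det := by
  rw [Matrix.charpoly, ← Polynomial.coe_evalRingHom, RingHom.map_det]
  congr 1
  ext i j
  by_cases h : i = j
  · subst h
    simp [Matrix.charmatrix_apply_eq, Matrix.one_apply, mul_comm]
  · simp [Matrix.charmatrix_apply_ne _ _ _ h, Matrix.one_apply, h]

/-- the all-ones rectangular matrix as a rank-one product -/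
lemma J_eq : (Matrix.of fun (_ : m) (_ : n) => (1 : ℝ))
    = Matrix.replicateCol Unit (fun _ => (1 : ℝ)) * Matrix.replicateRow Unit (fun _ => (1 : ℝ)) := by
  ext i j
  simp [Matrix.mul_apply]

noncomputable def s (A : Matrix m m ℝ) : ℝ := ∑ i, ∑ j, A i j

lemma detJ (M : Matrix m m ℝ) (h : IsUnit M.det) :
    (M + Matrix.of fun _ _ => (1 : ℝ)).det = M.det * (1 + s M⁻¹) := by
  rw [J_eq, Matrix.det_add_replicateCol_mul_replicateRow h]
  congr 1
  rw [Matrix.det_unique]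
  simp only [Matrix.mul_apply, s, Finset.sum_mul, Finset.mul_sum, Matrix.replicateRow_apply,
    Matrix.replicateCol_apply, one_mul, mul_one, Pi.add_apply, Matrix.add_apply, Matrix.one_apply_eq]
  rw [Finset.sum_comm]

lemma JMJ (A : Matrix m m ℝ) :
    ((Matrix.of fun _ _ => (1:ℝ)) : Matrix n m ℝ) * A * ((Matrix.of fun _ _ => (1:ℝ)) : Matrix m n ℝ)
      = Matrix.of fun _ _ => s A := by
  ext i j
  simp only [Matrix.mul_apply, Matrix.of_apply, one_mul, mul_one, s]
  rw [Finset.sum_comm]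

lemma key (M₁ : Matrix m m ℝ) (M₂ : Matrix n n ℝ) (h₁ : IsUnit M₁.det) (h₂ : IsUnit M₂.det) :
    (Matrix.fromBlocks M₁ (-(Matrix.of fun _ _ => (1 : ℝ)))
        (-(Matrix.of fun _ _ => (1 : ℝ))) M₂).det
      = M₁.det * (M₂ + Matrix.of fun _ _ => 1).det + M₂.det * (M₁ + Matrix.of fun _ _ => 1).det
        - (M₁ + Matrix.of fun _ _ => 1).det * (M₂ + Matrix.of fun _ _ => 1).det := by
  haveI := M₁.invertibleOfIsUnitDet h₁
  rw [Matrix.det_fromBlocks₁₁, Matrix.invOf_eq_nonsing_inv]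
  have hJ : M₂ - -((Matrix.of fun _ _ => (1:ℝ)) : Matrix n m ℝ) * M₁⁻¹
        * -((Matrix.of fun _ _ => (1:ℝ)) : Matrix m n ℝ)
      = M₂ + Matrix.replicateCol Unit (fun (_ : n) => -(s M₁⁻¹)) * Matrix.replicateRow Unit (fun (_ : n) => (1:ℝ)) := by
    simp only [Matrix.neg_mul, Matrix.mul_neg, neg_neg]
    rw [JMJ]
    ext i j
    simp [Matrix.mul_apply, sub_eq_add_neg]
  rw [hJ, Matrix.det_add_replicateCol_mul_replicateRow h₂]
  have hv : ((1 + Matrix.replicateRow Unit (fun (_ : n) => (1:ℝ)) * M₂⁻¹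
      * Matrix.replicateCol Unit (fun (_ : n) => -(s M₁⁻¹)) : Matrix Unit Unit ℝ)).det
      = 1 - s M₁⁻¹ * s M₂⁻¹ := by
    rw [Matrix.det_unique]
    simp only [Matrix.add_apply, Matrix.one_apply_eq, Matrix.mul_apply, Matrix.replicateRow_apply,
      Matrix.replicateCol_apply, one_mul]
    rw [← Finset.sum_mul, Finset.sum_comm]
    show 1 + s M₂⁻¹ * -(s M₁⁻¹) = _
    ring
  rw [hv, detJ M₁ h₁, detJ M₂ h₂]
  ring

lemma adj_compl (G : SimpleGraph m) [DecidableRel G.Adj] :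
    Gᶜ.adjMatrix ℝ = (Matrix.of fun _ _ => (1 : ℝ)) - 1 - G.adjMatrix ℝ := by
  ext i j
  by_cases h : i = j
  · subst h; simp
  · by_cases hadj : G.Adj i j <;>
      simp [Matrix.one_apply, h, hadj, SimpleGraph.compl_adj]

lemma eval_comp_compl (G : SimpleGraph m) [DecidableRel G.Adj] (x : ℝ) :
    ((Gᶜ.adjMatrix ℝ).charpoly.comp (-X - 1)).eval x
      = (-1 : ℝ) ^ (Fintype.card m)
        * ((x • (1 : Matrix m m ℝ) - G.adjMatrix ℝ) + Matrix.of fun _ _ => 1).det := by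
  rw [Polynomial.eval_comp]
  simp only [eval_sub, eval_neg, eval_X, eval_one]
  rw [eval_charpoly, adj_compl]
  have h1 : (-x - 1) • (1 : Matrix m m ℝ)
      - ((Matrix.of fun _ _ => (1 : ℝ)) - 1 - G.adjMatrix ℝ)
      = -((x • (1 : Matrix m m ℝ) - G.adjMatrix ℝ) + Matrix.of fun _ _ => 1) := by
    rw [sub_smul, neg_smul, one_smul]
    abel
  rw [h1, Matrix.det_neg]

end Stmt16Aux


open Polynomial in
/-- characteristic polynomial of the join (complete product) of two simple
graphs, whose adjacency matrix is the block matrix with all-ones off-diagonal blocks: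
`χ_{G₁∇G₂}(x) = (−1)^{n₂} χ_{G₁}(x) χ_{G₂ᶜ}(−x−1) + (−1)^{n₁} χ_{G₂}(x) χ_{G₁ᶜ}(−x−1)
  − (−1)^{n₁+n₂} χ_{G₁ᶜ}(−x−1) χ_{G₂ᶜ}(−x−1)`. -/
theorem stmt16 (V₁ V₂ : Type) [Fintype V₁] [Fintype V₂] [DecidableEq V₁] [DecidableEq V₂]
    (G₁ : SimpleGraph V₁) (G₂ : SimpleGraph V₂)
    [DecidableRel G₁.Adj] [DecidableRel G₂.Adj] :
    (Matrix.fromBlocks (G₁.adjMatrix ℝ) (Matrix.of fun _ _ => (1 : ℝ))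
        (Matrix.of fun _ _ => (1 : ℝ)) (G₂.adjMatrix ℝ)).charpoly =
      (-1 : ℝ[X]) ^ (Fintype.card V₂) * (G₁.adjMatrix ℝ).charpoly
          * ((G₂ᶜ.adjMatrix ℝ).charpoly.comp (-X - 1))
      + (-1 : ℝ[X]) ^ (Fintype.card V₁) * (G₂.adjMatrix ℝ).charpoly
          * ((G₁ᶜ.adjMatrix ℝ).charpoly.comp (-X - 1))
      - (-1 : ℝ[X]) ^ (Fintype.card V₁ + Fintype.card V₂)
          * ((G₁ᶜ.adjMatrix ℝ).charpoly.comp (-X - 1))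
          * ((G₂ᶜ.adjMatrix ℝ).charpoly.comp (-X - 1)) := by
  classical
  set A₁ := G₁.adjMatrix ℝ with hA₁
  set A₂ := G₂.adjMatrix ℝ with hA₂
  apply Polynomial.eq_of_infinite_eval_eq
  have hp0 : A₁.charpoly * A₂.charpoly ≠ 0 :=
    mul_ne_zero (Matrix.charpoly_monic _).ne_zero (Matrix.charpoly_monic _).ne_zero
  apply Set.Infinite.mono (s := {x | ¬ (A₁.charpoly * A₂.charpoly).IsRoot x})
  swap
  · have : {x | ¬ (A₁.charpoly * A₂.charpoly).IsRoot x}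
        = {x | (A₁.charpoly * A₂.charpoly).IsRoot x}ᶜ := rfl
    rw [this]
    exact Set.Finite.infinite_compl (Polynomial.finite_setOf_isRoot hp0)
  intro x hx
  simp only [Set.mem_setOf_eq, Polynomial.IsRoot, Polynomial.eval_mul, mul_eq_zero,
    not_or] at hx
  have h₁ : IsUnit (x • (1 : Matrix V₁ V₁ ℝ) - A₁).det := by
    rw [isUnit_iff_ne_zero, ← Stmt16Aux.eval_charpoly]; exact hx.1
  have h₂ : IsUnit (x • (1 : Matrix V₂ V₂ ℝ) - A₂).det := by
    rw [isUnit_iff_ne_zero, ← Stmt16Aux.eval_charpoly]; exact hx.2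
  show _ = _
  rw [Stmt16Aux.eval_charpoly]
  have hblock : x • (1 : Matrix (V₁ ⊕ V₂) (V₁ ⊕ V₂) ℝ)
        - Matrix.fromBlocks A₁ (Matrix.of fun _ _ => (1 : ℝ))
          (Matrix.of fun _ _ => (1 : ℝ)) A₂
      = Matrix.fromBlocks (x • (1 : Matrix V₁ V₁ ℝ) - A₁)
          (-(Matrix.of fun _ _ => (1 : ℝ))) (-(Matrix.of fun _ _ => (1 : ℝ)))
          (x • (1 : Matrix V₂ V₂ ℝ) - A₂) := by
    rw [← Matrix.fromBlocks_one, Matrix.fromBlocks_smul]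
    ext (i | i) (j | j) <;>
      simp [Matrix.fromBlocks, Matrix.sub_apply]
  rw [hblock, Stmt16Aux.key _ _ h₁ h₂]
  simp only [Polynomial.eval_add, Polynomial.eval_sub, Polynomial.eval_mul, Polynomial.eval_pow,
    Polynomial.eval_neg, Polynomial.eval_one]
  rw [Stmt16Aux.eval_comp_compl, Stmt16Aux.eval_comp_compl, Stmt16Aux.eval_charpoly,
    Stmt16Aux.eval_charpoly]
  have t₁ : ((-1 : ℝ)) ^ (Fintype.card V₁) * ((-1 : ℝ)) ^ (Fintype.card V₁) = 1 := by
    rw [← pow_add]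
    exact Even.neg_one_pow ⟨Fintype.card V₁, rfl⟩
  have t₂ : ((-1 : ℝ)) ^ (Fintype.card V₂) * ((-1 : ℝ)) ^ (Fintype.card V₂) = 1 := by
    rw [← pow_add]
    exact Even.neg_one_pow ⟨Fintype.card V₂, rfl⟩
  rw [pow_add]
  set d₁ := (x • (1 : Matrix V₁ V₁ ℝ) - A₁).det
  set d₂ := (x • (1 : Matrix V₂ V₂ ℝ) - A₂).det
  set e₁ := (x • (1 : Matrix V₁ V₁ ℝ) - A₁ + Matrix.of fun _ _ => (1:ℝ)).det
  set e₂ := (x • (1 : Matrix V₂ V₂ ℝ) - A₂ + Matrix.of fun _ _ => (1:ℝ)).det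
  set a := ((-1 : ℝ)) ^ (Fintype.card V₁)
  set b := ((-1 : ℝ)) ^ (Fintype.card V₂)
  linear_combination (e₁ * e₂ - d₂ * e₁) * t₁ + (e₁ * e₂ * a * a - d₁ * e₂) * t₂
end

section
/- Let G₁, G₂ be finite simple graphs with chosen vertices v ∈ V(G₁), w ∈ V(G₂). Then the characteristic polynomial of the vertex-identification (coalescence) G₁ • G₂ at v = w satisfies χ_{G₁•G₂}(x) = χ_{G₁}(x) χ_{G₂−w}(x) + χ_{G₁−v}(x) χ_{G₂}(x) − x χ_{G₁−v}(x) χ_{G₂−w}(x). -/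
open Polynomial Matrix

section Aux

variable {R : Type*} [CommRing R]
variable {m n : Type} [Fintype m] [Fintype n] [DecidableEq m] [DecidableEq n]

def myEquiv (v : m) : ({x : m // x ≠ v} ⊕ (Unit ⊕ n)) ≃ (m ⊕ n) where
  toFun x := match x with
    | Sum.inl a => Sum.inl a.1
    | Sum.inr (Sum.inl _) => Sum.inl v
    | Sum.inr (Sum.inr b) => Sum.inr b
  invFun x := match x with
    | Sum.inl a => if h : a = v then Sum.inr (Sum.inl ()) else Sum.inl ⟨a, h⟩
    | Sum.inr b => Sum.inr (Sum.inr b)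
  left_inv := by
    rintro (⟨a, ha⟩ | (⟨⟩ | b))
    · simp [ha]
    · simp
    · simp
  right_inv := by
    rintro (a | b)
    · by_cases h : a = v <;> simp [h]
    · simp

lemma detA (A : Matrix m m R) (D : Matrix n n R) (u1 u2 : n → R) (v : m) :
    (fromBlocks A (Matrix.of fun a b => if a = v then u1 b else 0)
      (Matrix.of fun a b => if b = v then u2 a else 0) D).det
    = A.det * D.det
      + (A.submatrix (Subtype.val : {x : m // x ≠ v} → m) Subtype.val).det
        * (fromBlocks (0 : Matrix Unit Unit R) (Matrix.of fun _ b => u1 b)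
            (Matrix.of fun a _ => u2 a) D).det := by
  set B : Matrix m n R := Matrix.of fun a b => if a = v then u1 b else 0 with hB
  set Cm : Matrix n m R := Matrix.of fun a b => if b = v then u2 a else 0 with hC
  set N : Matrix (m ⊕ n) (m ⊕ n) R := fromBlocks A B Cm D with hNdef
  have hrow : N = updateRow N (Sum.inl v)
      (Sum.elim (A v) (0 : n → R) + Sum.elim (0 : m → R) u1) := by
    ext (a | a) (b | b) <;>
      simp [hNdef, hB, hC, updateRow_apply, fromBlocks] <;>
        (try split_ifs) <;> (try intros) <;> (try subst_vars) <;> first | rfl | simp_all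
  rw [hrow, det_updateRow_add]
  clear hrow
  have h1 : updateRow N (Sum.inl v) (Sum.elim (A v) (0 : n → R)) = fromBlocks A 0 Cm D := by
    ext (a | a) (b | b) <;>
      simp [hNdef, hB, hC, updateRow_apply, fromBlocks] <;>
        (try split_ifs) <;> (try intros) <;> (try subst_vars) <;> first | rfl | simp_all
  rw [h1, det_fromBlocks_zero₁₂]
  set N2 : Matrix (m ⊕ n) (m ⊕ n) R :=
    updateRow N (Sum.inl v) (Sum.elim (0 : m → R) u1) with hN2
  have hcol : N2 = updateCol N2 (Sum.inl v)
      (Sum.elim (fun a => if a = v then 0 else A a v) (0 : n → R) + Sum.elim (0 : m → R) u2) := by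
    ext (a | a) (b | b) <;>
      simp [hN2, hNdef, hB, hC, updateRow_apply, updateCol_apply, fromBlocks] <;>
        (try split_ifs) <;> (try intros) <;> (try subst_vars) <;> first | rfl | simp_all
  rw [hcol, det_updateCol_add]
  clear hcol
  have h2a : updateCol N2 (Sum.inl v)
      (Sum.elim (fun a => if a = v then 0 else A a v) (0 : n → R))
      = fromBlocks (updateRow A v 0) B 0 D := by
    ext (a | a) (b | b) <;>
      simp [hN2, hNdef, hB, hC, updateRow_apply, updateCol_apply, fromBlocks] <;>
        (try split_ifs) <;> (try intros) <;> (try subst_vars) <;> first | rfl | simp_all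
  have hzero : (updateRow A v 0).det = 0 :=
    det_eq_zero_of_row_eq_zero v (fun j => by simp)
  rw [h2a, det_fromBlocks_zero₂₁, hzero, zero_mul, zero_add]
  set K : Matrix (Unit ⊕ n) (Unit ⊕ n) R :=
    fromBlocks (0 : Matrix Unit Unit R) (Matrix.of fun _ b => u1 b)
      (Matrix.of fun a _ => u2 a) D with hK
  set N2b : Matrix (m ⊕ n) (m ⊕ n) R :=
    updateCol N2 (Sum.inl v) (Sum.elim (0 : m → R) u2) with hN2b
  have h2b : N2b.submatrix (myEquiv (n := n) v) (myEquiv (n := n) v)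
      = fromBlocks (A.submatrix (Subtype.val : {x : m // x ≠ v} → m) Subtype.val) 0 0 K := by
    ext i j
    rcases i with ⟨a, ha⟩ | (⟨⟩ | a) <;> rcases j with ⟨b, hb⟩ | (⟨⟩ | b) <;>
      simp [hN2b, hN2, hNdef, hB, hC, hK, myEquiv, updateRow_apply, updateCol_apply,
        fromBlocks] <;> (try split_ifs) <;> (try intros) <;> (try subst_vars) <;> first | rfl | simp_all
  have hdet2b : N2b.det
      = (A.submatrix (Subtype.val : {x : m // x ≠ v} → m) Subtype.val).det * K.det := by
    rw [← det_submatrix_equiv_self (myEquiv (n := n) v) N2b, h2b, det_fromBlocks_zero₁₂]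
  rw [hdet2b]

lemma detB (D : Matrix n n R) (u1 u2 : n → R) (t : R) :
    (fromBlocks (Matrix.of fun _ _ : Unit => t) (Matrix.of fun _ b => u1 b)
      (Matrix.of fun a _ => u2 a) D).det
    = t * D.det + (fromBlocks (0 : Matrix Unit Unit R) (Matrix.of fun _ b => u1 b)
        (Matrix.of fun a _ => u2 a) D).det := by
  have h : (fromBlocks (Matrix.of fun _ _ : Unit => t) (Matrix.of fun _ b => u1 b)
      (Matrix.of fun a _ => u2 a) D)
      = updateRow (fromBlocks (Matrix.of fun _ _ : Unit => t) (Matrix.of fun _ b => u1 b)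
          (Matrix.of fun a _ => u2 a) D) (Sum.inl ())
        (Sum.elim (fun _ => t) (0 : n → R) + Sum.elim (0 : Unit → R) u1) := by
    ext (a | a) (b | b) <;> simp [updateRow_apply, fromBlocks]
  rw [h, det_updateRow_add]
  congr 1
  · have : updateRow (fromBlocks (Matrix.of fun _ _ : Unit => t) (Matrix.of fun _ b => u1 b)
          (Matrix.of fun a _ => u2 a) D) (Sum.inl ()) (Sum.elim (fun _ => t) (0 : n → R))
        = fromBlocks (Matrix.of fun _ _ : Unit => t) 0 (Matrix.of fun a _ => u2 a) D := by
      ext (a | a) (b | b) <;> simp [updateRow_apply, fromBlocks]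
    rw [this, det_fromBlocks_zero₁₂, det_unique]
    rfl
  · congr 1
    ext (a | a) (b | b) <;> simp [updateRow_apply, fromBlocks]

def wEquiv (w : n) : (Unit ⊕ {x : n // x ≠ w}) ≃ n where
  toFun := Sum.elim (fun _ => w) Subtype.val
  invFun a := if h : a = w then Sum.inl () else Sum.inr ⟨a, h⟩
  left_inv := by
    rintro (⟨⟩ | ⟨a, ha⟩)
    · simp
    · simp [ha]
  right_inv := by
    intro a
    by_cases h : a = w <;> simp [h]

lemma charmatrix_submatrix' {l : Type} [DecidableEq l] [Fintype l]
    (A : Matrix m m R) (f : l → m) (hf : Function.Injective f) :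
    (charmatrix A).submatrix f f = charmatrix (A.submatrix f f) := by
  ext i j
  by_cases h : i = j
  · subst h; simp [charmatrix_apply_eq]
  · rw [submatrix_apply, charmatrix_apply_ne _ _ _ (fun hh => h (hf hh)),
      charmatrix_apply_ne _ _ _ h, submatrix_apply]

end Aux


open Polynomial in
/-- characteristic polynomial of the coalescence (vertex identification)
`G₁ • G₂` at `v = w`:
`χ_{G₁•G₂}(x) = χ_{G₁}(x) χ_{G₂−w}(x) + χ_{G₁−v}(x) χ_{G₂}(x) − x χ_{G₁−v}(x) χ_{G₂−w}(x)`. -/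
theorem stmt17 (V₁ V₂ : Type) [Fintype V₁] [Fintype V₂] [DecidableEq V₁] [DecidableEq V₂]
    (G₁ : SimpleGraph V₁) (G₂ : SimpleGraph V₂)
    [DecidableRel G₁.Adj] [DecidableRel G₂.Adj] (v : V₁) (w : V₂) :
    let A₁ := G₁.adjMatrix ℝ
    let A₂ := G₂.adjMatrix ℝ
    -- adjacency matrix of the coalescence, on vertex set `V₁ ⊕ (V₂ \ {w})`,
    -- the vertex `v` playing the role of the identified vertex
    let M : Matrix (V₁ ⊕ {x : V₂ // x ≠ w}) (V₁ ⊕ {x : V₂ // x ≠ w}) ℝ :=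
      fun x y =>
        match x, y with
        | Sum.inl a, Sum.inl b => A₁ a b
        | Sum.inr a, Sum.inr b => A₂ a.1 b.1
        | Sum.inl a, Sum.inr b => if a = v then A₂ w b.1 else 0
        | Sum.inr a, Sum.inl b => if b = v then A₂ w a.1 else 0
    let A₁v : Matrix {x : V₁ // x ≠ v} {x : V₁ // x ≠ v} ℝ :=
      A₁.submatrix Subtype.val Subtype.val
    let A₂w : Matrix {x : V₂ // x ≠ w} {x : V₂ // x ≠ w} ℝ :=
      A₂.submatrix Subtype.val Subtype.val
    M.charpoly = A₁.charpoly * A₂w.charpoly + A₁v.charpoly * A₂.charpoly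
      - X * A₁v.charpoly * A₂w.charpoly := by
  intro A₁ A₂ M A₁v A₂w
  set u : {x : V₂ // x ≠ w} → ℝ[X] := fun b => -C (A₂ w b.1) with hu
  -- the charmatrix of M in block form
  have hM : charmatrix M = fromBlocks (charmatrix A₁)
      (Matrix.of fun a b => if a = v then u b else 0)
      (Matrix.of fun a b => if b = v then u a else 0) (charmatrix A₂w) := by
    ext i j : 1
    rw [charmatrix_apply]
    rcases i with a | a <;> rcases j with b | b <;>
      simp [charmatrix_apply, Matrix.diagonal_apply, fromBlocks, hu, M, A₁, A₂w,
        apply_ite (fun r : ℝ => -(C r)), Subtype.ext_iff] <;>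
      (try split_ifs) <;> (try intros) <;> (try subst_vars) <;> simp_all
  -- the charmatrix of A₂ in bordered form
  have hA2 : (charmatrix A₂).submatrix (wEquiv w) (wEquiv w)
      = fromBlocks (Matrix.of fun _ _ : Unit => (X : ℝ[X]))
        (Matrix.of fun _ b => u b) (Matrix.of fun a _ => u a) (charmatrix A₂w) := by
    ext i j
    rcases i with ⟨⟩ | ⟨a, ha⟩ <;> rcases j with ⟨⟩ | ⟨b, hb⟩ <;>
      simp [charmatrix_apply, Matrix.diagonal_apply, fromBlocks, hu, A₂, A₂w, wEquiv,
        apply_ite (fun r : ℝ => -(C r)), Subtype.ext_iff,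
        SimpleGraph.adj_comm] <;>
      (try split_ifs) <;> (try intros) <;> (try subst_vars) <;> simp_all
  have hsub1 : (charmatrix A₁).submatrix
      (Subtype.val : {x : V₁ // x ≠ v} → V₁) Subtype.val = charmatrix A₁v :=
    charmatrix_submatrix' A₁ _ Subtype.val_injective
  have hK : A₂.charpoly
      = X * A₂w.charpoly + (fromBlocks (0 : Matrix Unit Unit ℝ[X])
          (Matrix.of fun _ b => u b) (Matrix.of fun a _ => u a) (charmatrix A₂w)).det := by
    rw [Matrix.charpoly, ← det_submatrix_equiv_self (wEquiv w) (charmatrix A₂), hA2, detB]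
    rfl
  rw [Matrix.charpoly, hM, detA, hsub1]
  rw [Matrix.charpoly, Matrix.charpoly]
  have : (fromBlocks (0 : Matrix Unit Unit ℝ[X])
      (Matrix.of fun _ b => u b) (Matrix.of fun a _ => u a) (charmatrix A₂w)).det
      = A₂.charpoly - X * A₂w.charpoly := by rw [hK]; ring
  rw [this]
  simp only [Matrix.charpoly]
  ring
end

section
/- Let R be a finite commutative ring with n = #U(R) units, and let Γ(R) be its zero-divisor graph with loops. Define EΓ(R) to be the graph on all of R where 0 is adjacent to every vertex of R including itself (a loop at 0), units have no other edges, and zero-divisors x, y are adjacent iff xy = 0. Then χ_{EΓ(R)}(x) = x^{n−1} ((−1)^{#V(Γ(R))+1} χ_{\overline{Γ(R)}}(−x) · x + χ_{Γ(R)}(x)(x² − n)). -/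
open Polynomial Matrix

lemma myEvalCharpoly {m : Type*} [Fintype m] [DecidableEq m] (M : Matrix m m ℝ) (x : ℝ) :
    M.charpoly.eval x = (x • (1 : Matrix m m ℝ) - M).det := by
  rw [Matrix.charpoly, ← Polynomial.coe_evalRingHom, RingHom.map_det]
  congr 1
  ext i j
  by_cases h : i = j
  · subst h; simp [charmatrix_apply_eq, Matrix.one_apply_eq]
  · simp [charmatrix_apply_ne _ _ _ h, Matrix.one_apply_ne h]

lemma myDetLemma {m : Type*} [Fintype m] [DecidableEq m] (N : Matrix m m ℝ)
    (hN : IsUnit N.det) (u v : m → ℝ) :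
    (N + replicateCol Unit u * replicateRow Unit v).det = N.det * (1 + v ⬝ᵥ (N⁻¹ *ᵥ u)) := by
  rw [Matrix.det_add_replicateCol_mul_replicateRow hN u v]
  congr 2
  rw [det_unique]
  congr 1
  simp [Matrix.mul_apply, Matrix.replicateRow_apply, Matrix.replicateCol_apply, dotProduct, Matrix.mulVec,
    Finset.sum_mul, Finset.mul_sum]
  rw [Finset.sum_comm]
  exact Finset.sum_congr rfl fun i _ => Finset.sum_congr rfl fun j _ => by ring

open Polynomial in
/-- For a finite commutative ring `R` with `n = #U(R)` units, the extended
zero-divisor graph `EΓ(R)` on all of `R` (with `x ∼ y` iff `xy = 0`, so `0` is adjacent to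
everything including itself and units are adjacent only to `0`) satisfies
`χ_{EΓ(R)}(x) = x^{n−1} ((−1)^{#V(Γ(R))+1} χ_{Γ(R)ᶜ}(−x)·x + χ_{Γ(R)}(x)(x² − n))`,
where the generalized complement has adjacency matrix `J − A(Γ(R))`. -/
theorem stmt18 (R : Type) [CommRing R] [Fintype R] [DecidableEq R] [Nontrivial R] :
    let n := Nat.card Rˣ
    let V := {x : R // x ≠ 0 ∧ ∃ y, y ≠ 0 ∧ x * y = 0}
    let A : Matrix V V ℝ := fun x y => if x.1 * y.1 = 0 then 1 else 0
    let Abar : Matrix V V ℝ := Matrix.of (fun _ _ => (1 : ℝ)) - A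
    let E : Matrix R R ℝ := fun x y => if x * y = 0 then 1 else 0
    E.charpoly = X ^ (n - 1) *
      ((-1 : ℝ[X]) ^ (Fintype.card V + 1) * (Abar.charpoly.comp (-X)) * X
        + A.charpoly * (X ^ 2 - (n : ℝ[X]))) := by
  intro n V A Abar E
  classical
  have hn : n = Fintype.card Rˣ := Nat.card_eq_fintype_card
  -- trichotomy
  have tri : ∀ x : R, x ≠ 0 → ¬ IsUnit x → (x ≠ 0 ∧ ∃ y, y ≠ 0 ∧ x * y = 0) := by
    intro x hx0 hxu
    refine ⟨hx0, ?_⟩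
    by_contra h
    push_neg at h
    have hinj : Function.Injective (fun a : R => x * a) := by
      intro a b hab
      have : x * (a - b) = 0 := by
        simp only at hab
        rw [mul_sub, hab, sub_self]
      by_contra hne
      exact h (a - b) (sub_ne_zero.mpr hne) this
    have hsurj := Finite.injective_iff_surjective.mp hinj
    obtain ⟨y, hy⟩ := hsurj 1
    exact hxu (IsUnit.of_mul_eq_one (a := x) y hy)
  have huv : ∀ (u : Rˣ) (z : R), (u : R) * z = 0 → z = 0 := by
    intro u z h
    have := congrArg (fun t => (↑u⁻¹ : R) * t) h
    simpa [← mul_assoc] using this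
  have hvnu : ∀ v : V, ¬ IsUnit (v.1) := by
    rintro ⟨v, hv0, y, hy0, hvy⟩ ⟨u, hu⟩
    exact hy0 (huv u y (hu ▸ hvy))
  -- the equiv
  let f : Unit ⊕ Rˣ ⊕ V → R := Sum.elim (fun _ => 0) (Sum.elim (fun u => ↑u) (fun v => ↑v))
  have hf : Function.Bijective f := by
    constructor
    · rintro (⟨⟩ | u | v) (⟨⟩ | u' | v') h <;>
        simp only [f, Sum.elim_inl, Sum.elim_inr] at h
      · rfl
      · exact absurd h.symm u'.isUnit.ne_zero
      · exact absurd h.symm v'.2.1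
      · exact absurd h u.isUnit.ne_zero
      · exact congrArg (fun t => Sum.inr (Sum.inl t)) (Units.ext h)
      · exact ((hvnu v') (h ▸ u.isUnit)).elim
      · exact absurd h v.2.1
      · exact ((hvnu v) (h.symm ▸ u'.isUnit)).elim
      · exact congrArg (fun t => Sum.inr (Sum.inr t)) (Subtype.ext h)
    · intro x
      by_cases hx0 : x = 0
      · exact ⟨Sum.inl (), hx0.symm⟩
      by_cases hxu : IsUnit x
      · obtain ⟨u, hu⟩ := hxu
        exact ⟨Sum.inr (Sum.inl u), hu⟩
      · exact ⟨Sum.inr (Sum.inr ⟨x, tri x hx0 hxu⟩), rfl⟩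
  let e : (Unit ⊕ Rˣ ⊕ V) ≃ R := Equiv.ofBijective f hf
  have he0 : e (Sum.inl ()) = 0 := rfl
  have heu : ∀ u : Rˣ, e (Sum.inr (Sum.inl u)) = ↑u := fun _ => rfl
  have hev : ∀ v : V, e (Sum.inr (Sum.inr v)) = ↑v := fun _ => rfl
  have hE : ∀ a b : R, E a b = if a * b = 0 then 1 else 0 := fun _ _ => rfl
  have hA : ∀ v w : V, A v w = if v.1 * w.1 = 0 then 1 else 0 := fun _ _ => rfl
  have huu : ∀ u u' : Rˣ, (↑u * ↑u' : R) ≠ 0 := by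
    intro u u' h
    exact (u * u').isUnit.ne_zero (by rw [Units.val_mul]; exact h)
  have huvne : ∀ (u : Rˣ) (v : V), (↑u * ↑v.1 : R) ≠ 0 := fun u v h => v.2.1 (huv u _ h)
  have hvune : ∀ (v : V) (u : Rˣ), (↑v.1 * ↑u : R) ≠ 0 := by
    intro v u h
    rw [mul_comm] at h
    exact v.2.1 (huv u _ h)
  have hune : ∀ (u : Rˣ) (v : V), (↑u : R) ≠ ↑v := fun u v h => hvnu v (h ▸ u.isUnit)
  have hvu : ∀ (v : V) (u : Rˣ), (↑v : R) ≠ ↑u := fun v u h => hune u v h.symm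
  have h0u : ∀ u : Rˣ, (0 : R) ≠ ↑u := fun u h => u.isUnit.ne_zero h.symm
  have hv0' : ∀ v : V, (↑v : R) ≠ 0 := fun v => v.2.1
  have h0v : ∀ v : V, (0 : R) ≠ ↑v := fun v h => v.2.1 h.symm
  -- key determinant identity for generic real x
  have key : ∀ x : ℝ, x ≠ 0 → x - 1 ≠ 0 → (x • (1 : Matrix V V ℝ) - A).det ≠ 0 →
      (x • (1 : Matrix R R ℝ) - E).det =
        x ^ (n - 1) * (-((x • (1 : Matrix V V ℝ) - A + Matrix.of fun _ _ => (1 : ℝ)).det * x)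
          + (x • (1 : Matrix V V ℝ) - A).det * (x ^ 2 - (n : ℝ))) := by
    intro x hx0 hx1 hxA
    have hxAu : IsUnit (x • (1 : Matrix V V ℝ) - A).det := isUnit_iff_ne_zero.mpr hxA
    rw [← Matrix.det_submatrix_equiv_self e]
    have hmain : ∀ a b : R, (x • (1 : Matrix R R ℝ) - E) a b
        = x * (if a = b then 1 else 0) - (if a * b = 0 then 1 else 0) := by
      intro a b
      simp [Matrix.sub_apply, Matrix.smul_apply, Matrix.one_apply, hE]
    have hblock : ((x • (1 : Matrix R R ℝ) - E).submatrix e e) =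
        fromBlocks (Matrix.of fun _ _ => x - 1) (Matrix.of fun _ _ => (-1 : ℝ))
          (Matrix.of fun _ _ => (-1 : ℝ))
          (fromBlocks (x • 1) 0 0 (x • (1 : Matrix V V ℝ) - A)) := by
      ext i j
      rcases i with ⟨⟩ | iu | iv <;> rcases j with ⟨⟩ | ju | jv <;>
        simp only [Matrix.submatrix_apply, hmain, he0, heu, hev,
          Matrix.fromBlocks_apply₁₁, Matrix.fromBlocks_apply₁₂, Matrix.fromBlocks_apply₂₁,
          Matrix.fromBlocks_apply₂₂, Matrix.of_apply] <;>
        simp [Matrix.smul_apply, Matrix.one_apply, hA, huu, huvne, hvune, hune, hvu,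
          h0u, hv0', h0v, Units.ext_iff, Subtype.coe_inj,
          Matrix.sub_apply, Matrix.zero_apply]
    rw [hblock]
    letI : Invertible (Matrix.of fun _ _ => x - 1 : Matrix Unit Unit ℝ) :=
      ⟨Matrix.of fun _ _ => (x - 1)⁻¹,
        by ext i j; simp [Matrix.mul_apply, Matrix.one_apply, inv_mul_cancel₀ hx1],
        by ext i j; simp [Matrix.mul_apply, Matrix.one_apply, mul_inv_cancel₀ hx1]⟩
    rw [Matrix.det_fromBlocks₁₁]
    have hinv : (⅟(Matrix.of fun _ _ => x - 1 : Matrix Unit Unit ℝ))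
        = Matrix.of fun _ _ => (x - 1)⁻¹ := rfl
    have hdetM1 : (Matrix.of fun _ _ => x - 1 : Matrix Unit Unit ℝ).det = x - 1 := by
      rw [Matrix.det_unique]; rfl
    have hD : fromBlocks (x • 1) 0 0 (x • (1 : Matrix V V ℝ) - A) -
        (Matrix.of fun _ _ => (-1 : ℝ) : Matrix (Rˣ ⊕ V) Unit ℝ)
          * ⅟(Matrix.of fun _ _ => x - 1 : Matrix Unit Unit ℝ)
          * (Matrix.of fun _ _ => (-1 : ℝ) : Matrix Unit (Rˣ ⊕ V) ℝ) =
        fromBlocks (x • 1) 0 0 (x • (1 : Matrix V V ℝ) - A)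
          + replicateCol Unit (fun _ => -(x - 1)⁻¹) * replicateRow Unit (fun _ => (1 : ℝ)) := by
      rw [hinv]
      ext i j
      simp [Matrix.mul_apply, Matrix.sub_apply, Matrix.add_apply, Matrix.replicateCol_apply,
        Matrix.replicateRow_apply]
      ring
    rw [hD]
    have hNdetval : (fromBlocks (x • 1) 0 0 (x • (1 : Matrix V V ℝ) - A)
        : Matrix (Rˣ ⊕ V) (Rˣ ⊕ V) ℝ).det
        = x ^ Fintype.card Rˣ * (x • (1 : Matrix V V ℝ) - A).det := by
      rw [Matrix.det_fromBlocks_zero₂₁, Matrix.det_smul, Matrix.det_one, mul_one]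
    have hNdet : IsUnit (fromBlocks (x • 1) 0 0 (x • (1 : Matrix V V ℝ) - A)
        : Matrix (Rˣ ⊕ V) (Rˣ ⊕ V) ℝ).det := by
      rw [hNdetval]
      exact isUnit_iff_ne_zero.mpr (mul_ne_zero (pow_ne_zero _ hx0) hxA)
    rw [myDetLemma _ hNdet]
    set c : ℝ := (x - 1)⁻¹ with hc
    set w : Rˣ ⊕ V → ℝ :=
      Sum.elim (fun _ => -c / x) ((x • (1 : Matrix V V ℝ) - A)⁻¹ *ᵥ fun _ => -c) with hwdef
    have hNw : (fromBlocks (x • 1) 0 0 (x • (1 : Matrix V V ℝ) - A)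
        : Matrix (Rˣ ⊕ V) (Rˣ ⊕ V) ℝ) *ᵥ w = fun _ => -c := by
      rw [hwdef, Matrix.fromBlocks_mulVec]
      funext i
      rcases i with iu | iv
      · simp only [Sum.elim_inl, Matrix.zero_mulVec, add_zero, Matrix.smul_mulVec,
          Matrix.one_mulVec, Pi.smul_apply, smul_eq_mul, Sum.elim_comp_inl, Sum.elim_comp_inr]
        field_simp
      · simp only [Sum.elim_inr, Matrix.zero_mulVec, zero_add, Matrix.mulVec_mulVec,
          Sum.elim_comp_inl, Sum.elim_comp_inr, Matrix.mul_nonsing_inv _ hxAu,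
          Matrix.one_mulVec]
    have hNinvu : (fromBlocks (x • 1) 0 0 (x • (1 : Matrix V V ℝ) - A)
        : Matrix (Rˣ ⊕ V) (Rˣ ⊕ V) ℝ)⁻¹ *ᵥ (fun _ => -c) = w := by
      rw [← hNw, Matrix.mulVec_mulVec, Matrix.nonsing_inv_mul _ hNdet, Matrix.one_mulVec]
    rw [hNinvu]
    set s : ℝ := (fun _ => (1 : ℝ)) ⬝ᵥ ((x • (1 : Matrix V V ℝ) - A)⁻¹ *ᵥ fun _ => (1 : ℝ))
      with hs
    have hdot : (fun _ => (1 : ℝ)) ⬝ᵥ w = (Fintype.card Rˣ : ℝ) * (-c / x) + (-c) * s := by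
      have hcv : (fun _ => -c : V → ℝ) = (-c) • (fun _ : V => (1 : ℝ)) := by
        funext _; simp
      rw [hwdef, hs]
      simp only [dotProduct, Fintype.sum_sum_type, Sum.elim_inl, Sum.elim_inr, one_mul]
      rw [hcv, Matrix.mulVec_smul]
      simp [Finset.mul_sum, Finset.sum_const, nsmul_eq_mul]
    rw [hdot]
    have hJdet : (x • (1 : Matrix V V ℝ) - A + Matrix.of fun _ _ => (1 : ℝ)).det
        = (x • (1 : Matrix V V ℝ) - A).det * (1 + s) := by
      have hof : (Matrix.of fun _ _ => (1 : ℝ) : Matrix V V ℝ)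
          = replicateCol Unit (fun _ => (1 : ℝ)) * replicateRow Unit (fun _ => (1 : ℝ)) := by
        ext i j; simp [Matrix.mul_apply]
      rw [hof, myDetLemma _ hxAu, hs]
    rw [hJdet, hdetM1, hNdetval]
    -- now pure real arithmetic
    have hnpos : 0 < n := Nat.card_pos
    have hnk : Fintype.card Rˣ = (n - 1) + 1 := by omega
    rw [hnk]
    rw [hc]
    field_simp
    ring
    rw [Nat.add_sub_cancel' (show 1 ≤ n by omega)]
  -- wrap up: compare polynomials via infinitely many evaluations
  have hAchar : A.charpoly ≠ 0 := A.charpoly_monic.ne_zero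
  apply Polynomial.eq_of_infinite_eval_eq
  have hfin : (({0, 1} : Set ℝ) ∪ {x : ℝ | A.charpoly.IsRoot x}).Finite := by
    refine Set.Finite.union (Set.toFinite _) ?_
    refine Set.Finite.subset A.charpoly.roots.toFinset.finite_toSet ?_
    intro x hx
    simpa [Multiset.mem_toFinset, Polynomial.mem_roots hAchar] using hx
  refine Set.Infinite.mono ?_ hfin.infinite_compl
  intro x hx
  simp only [Set.mem_compl_iff, Set.mem_union, Set.mem_insert_iff, Set.mem_singleton_iff,
    Set.mem_setOf_eq, not_or] at hx
  obtain ⟨⟨hx0, hx1⟩, hxr⟩ := hx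
  have hxA : (x • (1 : Matrix V V ℝ) - A).det ≠ 0 := by
    rw [← myEvalCharpoly]; exact hxr
  have hx1' : x - 1 ≠ 0 := sub_ne_zero.mpr hx1
  show E.charpoly.eval x = _
  rw [myEvalCharpoly, key x hx0 hx1' hxA]
  simp only [eval_mul, eval_add, eval_pow, eval_comp, eval_neg, eval_X, eval_sub, eval_one,
    eval_natCast]
  rw [myEvalCharpoly Abar (-x)]
  have hAbar : (-x) • (1 : Matrix V V ℝ) - Abar
      = -(x • (1 : Matrix V V ℝ) - A + Matrix.of fun _ _ => (1 : ℝ)) := by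
    have h1 : Abar = Matrix.of (fun _ _ => (1 : ℝ)) - A := rfl
    rw [h1]; ext i j
    simp only [Matrix.sub_apply, Matrix.add_apply, Matrix.neg_apply, Matrix.smul_apply,
      Matrix.of_apply, smul_eq_mul]
    ring
  rw [hAbar, Matrix.det_neg, myEvalCharpoly A x]
  have hsign : ((-1 : ℝ)) ^ (Fintype.card V + 1) * ((-1 : ℝ)) ^ (Fintype.card V) = -1 := by
    rw [← pow_add]
    exact Odd.neg_one_pow ⟨Fintype.card V, by ring⟩
  set dJ := (x • (1 : Matrix V V ℝ) - A + Matrix.of fun _ _ => (1 : ℝ)).det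
  set dA := (x • (1 : Matrix V V ℝ) - A).det
  linear_combination (-(x ^ (n - 1) * x * dJ)) * hsign
end
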